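/- arXiv:1408.5782 — 13 statements merged into one kernel-verified Lean document; each statement's English description precedes it below -/
import Mathlib

section
/- For every integer i with 1 ≤ i ≤ s − 1, one has s − ri not congruent to s + ri modulo N, while q²·(s − ri) ≡ s + ri (mod N); hence the q²-cyclotomic coset of s − ri modulo N is {s − ri mod N, s + ri mod N} and has exactly two elements. -/
/-- For every integer `i` with `1 ≤ i ≤ s − 1`, one has `s − ri ≢ s + ri (mod N)`,
while `q²·(s − ri) ≡ s + ri (mod N)`; hence the `q²`-cyclotomic coset of `s − ri` modulo `N` is
`{s − ri mod N, s + ri mod N}` and has exactly two elements. -/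
theorem cyclotomic_coset_of_s_sub_ri
    (q : ℤ) (hq : ∃ p k : ℕ, Nat.Prime p ∧ Odd p ∧ 0 < k ∧ q = (p : ℤ) ^ k)
    (n r N s : ℤ) (hn : n = q ^ 2 + 1) (hr : r = q + 1) (hN : N = r * n)
    (hs : 2 * s = q ^ 2 + 1)
    (i : ℤ) (hi1 : 1 ≤ i) (hi2 : i ≤ s - 1) :
    ¬ (s - r * i ≡ s + r * i [ZMOD N]) ∧
    q ^ 2 * (s - r * i) ≡ s + r * i [ZMOD N] ∧
    {x : ℤ | ∃ k : ℕ, x = ((s - r * i) * q ^ (2 * k)) % N}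
      = {(s - r * i) % N, (s + r * i) % N} ∧
    (s - r * i) % N ≠ (s + r * i) % N := by
  obtain ⟨p, k0, hp, hpodd, hk0, hqpk⟩ := hq
  have hppos : (0:ℤ) < (p:ℤ) := by exact_mod_cast hp.pos
  have hqpos : 0 < q := by rw [hqpk]; positivity
  have hqodd : Odd q := by
    rw [hqpk]
    exact (Int.odd_coe_nat p |>.mpr hpodd).pow
  obtain ⟨m, hm⟩ := hqodd
  subst hN hn hr hm
  have hspos : 0 < s := by nlinarith
  set q : ℤ := 2 * m + 1 with hqdef
  set r : ℤ := q + 1 with hrdef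
  set N : ℤ := r * (q ^ 2 + 1) with hNdef
  set a : ℤ := s - r * i with hadef
  set b : ℤ := s + r * i with hbdef
  have hA : q ^ 2 * a ≡ b [ZMOD N] := by
    refine (Int.modEq_iff_dvd.mpr ⟨m - i, ?_⟩).symm
    simp only [hadef, hbdef, hNdef, hrdef, hqdef]
    linear_combination (2*m^2+2*m) * hs
  have hB : q ^ 2 * b ≡ a [ZMOD N] := by
    refine (Int.modEq_iff_dvd.mpr ⟨m + i, ?_⟩).symm
    simp only [hadef, hbdef, hNdef, hrdef, hqdef]
    linear_combination (2*m^2+2*m) * hs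
  have hne : ¬ (a ≡ b [ZMOD N]) := by
    intro h
    have hd : N ∣ b - a := Int.ModEq.dvd h
    have hba : b - a = (2 * r) * i := by simp only [hadef, hbdef]; ring
    have hN2 : N = (2 * r) * s := by
      simp only [hNdef, hrdef, hqdef]; linear_combination (-(2*m+2)) * hs
    rw [hba, hN2] at hd
    have hr0 : (2 * r) ≠ 0 := by simp only [hrdef, hqdef]; positivity
    have hsi : s ∣ i := (mul_dvd_mul_iff_left hr0).mp hd
    have := Int.le_of_dvd (by omega) hsi
    omega
  have hA' : a * q ^ 2 ≡ b [ZMOD N] := by rw [mul_comm a (q^2)]; exact hA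
  have hB' : b * q ^ 2 ≡ a [ZMOD N] := by rw [mul_comm b (q^2)]; exact hB
  have key : ∀ k : ℕ, (a * q ^ (2 * k)) ≡ a [ZMOD N] ∨ (a * q ^ (2 * k)) ≡ b [ZMOD N] := by
    intro k
    induction k with
    | zero => left; simp
    | succ k ih =>
      have e : a * q ^ (2 * (k + 1)) = (a * q ^ (2 * k)) * q ^ 2 := by
        rw [show 2 * (k + 1) = 2 * k + 2 from by ring, pow_add]; ring
      rcases ih with h | h
      · right; rw [e]; exact (h.mul_right (q ^ 2)).trans hA'
      · left; rw [e]; exact (h.mul_right (q ^ 2)).trans hB'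
  refine ⟨hne, hA, ?_, hne⟩
  ext x
  simp only [Set.mem_setOf_eq, Set.mem_insert_iff, Set.mem_singleton_iff]
  constructor
  · rintro ⟨k, rfl⟩
    rcases key k with h | h
    · left; exact h
    · right; exact h
  · rintro (rfl | rfl)
    · exact ⟨0, by simp⟩
    · refine ⟨1, ?_⟩
      rw [show a * q ^ (2 * 1) = a * q ^ 2 from by norm_num]
      exact hA'.symm
end

section
/- For all integers i, j with 1 ≤ i < j ≤ s − 1, the two-element sets {s − ri mod N, s + ri mod N} and {s − rj mod N, s + rj mod N} are disjoint. -/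
/-- For all integers `i, j` with `1 ≤ i < j ≤ s − 1`, the two-element sets
`{s − ri mod N, s + ri mod N}` and `{s − rj mod N, s + rj mod N}` are disjoint. -/
theorem cyclotomic_cosets_disjoint
    (q : ℤ) (hq : ∃ p k : ℕ, Nat.Prime p ∧ Odd p ∧ 0 < k ∧ q = (p : ℤ) ^ k)
    (n r N s : ℤ) (hn : n = q ^ 2 + 1) (hr : r = q + 1) (hN : N = r * n)
    (hs : 2 * s = q ^ 2 + 1)
    (i j : ℤ) (hi : 1 ≤ i) (hij : i < j) (hj : j ≤ s - 1) :
    (({(s - r * i) % N, (s + r * i) % N} : Set ℤ) ∩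
      {(s - r * j) % N, (s + r * j) % N}) = ∅ := by
  obtain ⟨p, k, hp, hodd, hk, hqpk⟩ := hq
  have hp3 : 3 ≤ (p : ℤ) := by
    have h2 := hp.two_le
    have hne : p ≠ 2 := by rintro rfl; exact (by decide : ¬ Odd 2) hodd
    omega
  have hq3 : 3 ≤ q := by
    rw [hqpk]
    calc (3:ℤ) ≤ p := hp3
      _ = (p:ℤ) ^ 1 := (pow_one _).symm
      _ ≤ (p:ℤ) ^ k := pow_le_pow_right₀ (by omega) hk
  have hr0 : 0 < r := by omega
  have hn2s : n = 2 * s := by omega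
  have hs5 : 5 ≤ s := by nlinarith
  have hn0 : 0 < n := by omega
  have key : ∀ d : ℤ, 0 < d → d < n → ¬ (N ∣ r * d) := by
    intro d hd1 hd2 hdvd
    rw [hN, mul_dvd_mul_iff_left (by omega : r ≠ 0)] at hdvd
    have := Int.le_of_dvd hd1 hdvd
    omega
  have hji : 0 < j - i := by omega
  have hjin : j - i < n := by omega
  have hij2 : 0 < i + j := by omega
  have hijn : i + j < n := by omega
  have contra : ∀ a b : ℤ, a % N = b % N → N ∣ (b - a) := fun a b h => Int.ModEq.dvd h
  rw [Set.eq_empty_iff_forall_notMem]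
  rintro x ⟨hx1, hx2⟩
  simp only [Set.mem_insert_iff, Set.mem_singleton_iff] at hx1 hx2
  rcases hx1 with h1 | h1 <;> rcases hx2 with h2 | h2 <;> rw [h1] at h2
  · refine key (j - i) hji hjin ?_
    have h := contra _ _ h2
    rw [show (s - r*j) - (s - r*i) = -(r*(j-i)) by ring] at h
    exact dvd_neg.mp h
  · refine key (i + j) hij2 hijn ?_
    have h := contra _ _ h2
    rw [show (s + r*j) - (s - r*i) = r*(i+j) by ring] at h
    exact h
  · refine key (i + j) hij2 hijn ?_
    have h := contra _ _ h2
    rw [show (s - r*j) - (s + r*i) = -(r*(i+j)) by ring] at h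
    exact dvd_neg.mp h
  · refine key (j - i) hji hjin ?_
    have h := contra _ _ h2
    rw [show (s + r*j) - (s + r*i) = r*(j-i) by ring] at h
    exact h
end

section
/- The set θ = {(1 + ri) mod N : 0 ≤ i ≤ n − 1} is the disjoint union of the singleton {s mod N}, the singleton {t mod N} where t = 1 + r((q−1)/2 + (q²+1)/2), and the pairwise disjoint two-element sets {s − ri mod N, s + ri mod N} for 1 ≤ i ≤ s − 1. -/
/-- The set `θ = {(1 + ri) mod N : 0 ≤ i ≤ n − 1}` is the disjoint union of the
singleton `{s mod N}`, the singleton `{t mod N}` where `t = 1 + r((q−1)/2 + (q²+1)/2)`, and the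
pairwise disjoint two-element sets `{s − ri mod N, s + ri mod N}` for `1 ≤ i ≤ s − 1`. -/
theorem theta_disjoint_union
    (q : ℤ) (hq : ∃ p k : ℕ, Nat.Prime p ∧ Odd p ∧ 0 < k ∧ q = (p : ℤ) ^ k)
    (n r N s u t : ℤ) (hn : n = q ^ 2 + 1) (hr : r = q + 1) (hN : N = r * n)
    (hs : 2 * s = q ^ 2 + 1) (hu : 2 * u = q - 1) (ht : t = 1 + r * (u + s)) :
    ({x : ℤ | ∃ i : ℤ, 0 ≤ i ∧ i ≤ n - 1 ∧ x = (1 + r * i) % N}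
        = ({s % N, t % N} : Set ℤ) ∪
          ⋃ i ∈ Set.Icc (1 : ℤ) (s - 1), ({(s - r * i) % N, (s + r * i) % N} : Set ℤ)) ∧
    s % N ≠ t % N ∧
    (∀ i ∈ Set.Icc (1 : ℤ) (s - 1), (s - r * i) % N ≠ (s + r * i) % N) ∧
    (∀ i ∈ Set.Icc (1 : ℤ) (s - 1),
        s % N ∉ ({(s - r * i) % N, (s + r * i) % N} : Set ℤ) ∧
        t % N ∉ ({(s - r * i) % N, (s + r * i) % N} : Set ℤ)) ∧
    (∀ i ∈ Set.Icc (1 : ℤ) (s - 1), ∀ j ∈ Set.Icc (1 : ℤ) (s - 1), i ≠ j →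
        (({(s - r * i) % N, (s + r * i) % N} : Set ℤ) ∩
          {(s - r * j) % N, (s + r * j) % N}) = ∅) := by
  obtain ⟨p, k, hp, hodd, hk, hqpk⟩ := hq
  have hq3 : 3 ≤ q := by
    have h2 : 2 ≤ p := hp.two_le
    have h3 : 3 ≤ p := by rcases hodd with ⟨m, hm⟩; omega
    have h3' : (3 : ℤ) ≤ (p : ℤ) := by exact_mod_cast h3
    have hpk : (p : ℤ) ≤ (p : ℤ) ^ k := le_self_pow₀ (by linarith) (by omega)
    rw [hqpk]; linarith
  have hu1 : 1 ≤ u := by linarith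
  have hs5 : 5 ≤ s := by nlinarith
  have hn2s : n = 2 * s := by linarith
  have hu_le : u ≤ s - 1 := by nlinarith
  have hr4 : 4 ≤ r := by linarith
  have hn0 : (0 : ℤ) < n := by nlinarith
  have hN0 : (0 : ℤ) < N := by rw [hN]; exact mul_pos (by linarith) hn0
  have h2ru : 2 * (r * u) = q ^ 2 - 1 := by
    have h : 2 * (r * u) = r * (2 * u) := by ring
    rw [h, hu, hr]; ring
  have hsr : s = 1 + r * u := by linarith
  have em : ∀ m : ℤ, (1 + r * m) % N = 1 + r * (m % n) := by
    intro m
    have hmn : m = n * (m / n) + m % n := (Int.mul_ediv_add_emod m n).symm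
    have key : 1 + r * m = (1 + r * (m % n)) + N * (m / n) := by
      conv_lhs => rw [hmn]
      rw [hN]; ring
    rw [key, Int.add_mul_emod_self_left]
    have h1 : 0 ≤ m % n := Int.emod_nonneg m (by linarith)
    have h2 : m % n < n := Int.emod_lt_of_pos m hn0
    have h3 : r * (m % n) ≤ r * (n - 1) :=
      mul_le_mul_of_nonneg_left (by linarith) (by linarith)
    have h4 : r * (n - 1) = N - r := by rw [hN]; ring
    have h0 : 0 ≤ r * (m % n) := mul_nonneg (by linarith) h1
    exact Int.emod_eq_of_lt (by linarith) (by linarith)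
  have hne : ∀ a b : ℤ, ¬ (n ∣ (a - b)) → (1 + r * a) % N ≠ (1 + r * b) % N := by
    intro a b hd heq
    rw [em a, em b] at heq
    have h1 : a % n = b % n :=
      mul_left_cancel₀ (show r ≠ 0 by linarith) (by linarith)
    apply hd
    have h2 : (a - b) % n = 0 := by rw [Int.sub_emod, h1]; simp
    exact Int.dvd_of_emod_eq_zero h2
  have hnd : ∀ c : ℤ, -n < c → c < n → c ≠ 0 → ¬ (n ∣ c) := by
    rintro c h1 h2 h3 ⟨k, hk⟩
    rcases lt_trichotomy k 0 with h | h | h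
    · have hk1 : k ≤ -1 := by omega
      have : n * k ≤ n * (-1) := mul_le_mul_of_nonneg_left hk1 (le_of_lt hn0)
      linarith
    · subst h; simp at hk; exact h3 hk
    · have hk1 : 1 ≤ k := h
      have : n * 1 ≤ n * k := mul_le_mul_of_nonneg_left hk1 (le_of_lt hn0)
      linarith
  have e1 : s % N = (1 + r * u) % N := by rw [← hsr]
  have e2 : t % N = (1 + r * (u + s)) % N := by rw [← ht]
  have hM : ∀ i : ℤ, s - r * i = 1 + r * (u - i) := by intro i; rw [hsr]; ring
  have hP : ∀ i : ℤ, s + r * i = 1 + r * (u + i) := by intro i; rw [hsr]; ring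
  refine ⟨?_, ?_, ?_, ?_, ?_⟩
  · -- set equality
    ext x
    simp only [Set.mem_setOf_eq, Set.mem_union, Set.mem_insert_iff, Set.mem_singleton_iff,
      Set.mem_iUnion, Set.mem_Icc, exists_prop]
    constructor
    · rintro ⟨i, hi0, hi1, rfl⟩
      by_cases h1 : i = u
      · left; left; rw [h1, e1]
      by_cases h2 : i = u + s
      · left; right; rw [h2, e2]
      by_cases h3 : i < u
      · right
        refine ⟨u - i, ⟨by omega, by omega⟩, Or.inl ?_⟩
        rw [hM (u - i), show u - (u - i) = i from by ring]
      by_cases h4 : i < u + s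
      · right
        refine ⟨i - u, ⟨by omega, by omega⟩, Or.inr ?_⟩
        rw [hP (i - u), show u + (i - u) = i from by ring]
      · right
        refine ⟨u + n - i, ⟨by omega, by omega⟩, Or.inl ?_⟩
        rw [hM (u + n - i)]
        have h5 : (1 : ℤ) + r * (u - (u + n - i)) = (1 + r * i) + N * (-1) := by rw [hN]; ring
        rw [h5, Int.add_mul_emod_self_left]
    · rintro ((rfl | rfl) | ⟨j, ⟨hj1, hj2⟩, (rfl | rfl)⟩)
      · exact ⟨u, by omega, by omega, by rw [e1]⟩
      · exact ⟨u + s, by omega, by omega, by rw [e2]⟩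
      · refine ⟨(u - j) % n, Int.emod_nonneg _ (by omega),
          by have := Int.emod_lt_of_pos (u - j) hn0; omega, ?_⟩
        rw [hM j, em (u - j), em ((u - j) % n), Int.emod_emod_of_dvd _ dvd_rfl]
      · exact ⟨u + j, by omega, by omega, by rw [hP j]⟩
  · -- s ≠ t
    rw [e1, e2]
    exact hne u (u + s) (hnd _ (by omega) (by omega) (by omega))
  · -- within pair
    intro i hi
    simp only [Set.mem_Icc] at hi
    rw [hM i, hP i]
    exact hne _ _ (hnd _ (by omega) (by omega) (by omega))
  · -- s, t not in pairs
    intro i hi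
    simp only [Set.mem_Icc] at hi
    constructor
    · simp only [Set.mem_insert_iff, Set.mem_singleton_iff]
      push_neg
      rw [e1, hM i, hP i]
      exact ⟨hne _ _ (hnd _ (by omega) (by omega) (by omega)),
        hne _ _ (hnd _ (by omega) (by omega) (by omega))⟩
    · simp only [Set.mem_insert_iff, Set.mem_singleton_iff]
      push_neg
      rw [e2, hM i, hP i]
      exact ⟨hne _ _ (hnd _ (by omega) (by omega) (by omega)),
        hne _ _ (hnd _ (by omega) (by omega) (by omega))⟩
  · -- pairs pairwise disjoint
    intro i hi j hj hij
    simp only [Set.mem_Icc] at hi hj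
    apply Set.eq_empty_iff_forall_notMem.mpr
    rintro x ⟨hx1, hx2⟩
    simp only [Set.mem_insert_iff, Set.mem_singleton_iff] at hx1 hx2
    rw [hM i, hP i] at hx1
    rw [hM j, hP j] at hx2
    rcases hx1 with h1 | h1 <;> rcases hx2 with h2 | h2
    · exact hne (u - i) (u - j) (hnd _ (by omega) (by omega) (by omega)) (h1 ▸ h2)
    · exact hne (u - i) (u + j) (hnd _ (by omega) (by omega) (by omega)) (h1 ▸ h2)
    · exact hne (u + i) (u - j) (hnd _ (by omega) (by omega) (by omega)) (h1 ▸ h2)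
    · exact hne (u + i) (u + j) (hnd _ (by omega) (by omega) (by omega)) (h1 ▸ h2)
end

section
/- Let δ be an integer with 0 ≤ δ ≤ (q−1)/2. Then for all integers i, j with 0 ≤ i, j ≤ δ, one has −q(s − ri) not congruent to s − rj modulo N and −q(s − ri) not congruent to s + rj modulo N. Equivalently, the set Z = {s + ri mod N : −δ ≤ i ≤ δ} satisfies Z ∩ (−q·Z mod N) = ∅. -/
/-- Let `δ` be an integer with `0 ≤ δ ≤ (q−1)/2`. Then for all integers `i, j` with
`0 ≤ i, j ≤ δ`, one has `−q(s − ri) ≢ s − rj (mod N)` and `−q(s − ri) ≢ s + rj (mod N)`.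
Equivalently, the set `Z = {s + ri mod N : −δ ≤ i ≤ δ}` satisfies `Z ∩ (−q·Z mod N) = ∅`. -/
theorem defining_set_dual_disjoint
    (q : ℤ) (hq : ∃ p k : ℕ, Nat.Prime p ∧ Odd p ∧ 0 < k ∧ q = (p : ℤ) ^ k)
    (n r N s δ : ℤ) (hn : n = q ^ 2 + 1) (hr : r = q + 1) (hN : N = r * n)
    (hs : 2 * s = q ^ 2 + 1) (hδ0 : 0 ≤ δ) (hδ : 2 * δ ≤ q - 1) :
    (∀ i j : ℤ, 0 ≤ i → i ≤ δ → 0 ≤ j → j ≤ δ →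
        ¬ (-q * (s - r * i) ≡ s - r * j [ZMOD N]) ∧
        ¬ (-q * (s - r * i) ≡ s + r * j [ZMOD N])) ∧
    ({x : ℤ | ∃ i : ℤ, -δ ≤ i ∧ i ≤ δ ∧ x = (s + r * i) % N} ∩
      {y : ℤ | ∃ z ∈ {x : ℤ | ∃ i : ℤ, -δ ≤ i ∧ i ≤ δ ∧ x = (s + r * i) % N},
        y = (-q * z) % N}) = ∅ := by
  obtain ⟨p, k, hp, hpodd, hk, hqe⟩ := hq
  have hq3 : 3 ≤ q := by
    have hp2 := hp.two_le
    have hpo := Nat.odd_iff.mp hpodd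
    have hp3 : 3 ≤ p := by omega
    rw [hqe]
    calc (3 : ℤ) ≤ (p : ℤ) := by exact_mod_cast hp3
      _ ≤ (p : ℤ) ^ k := le_self_pow₀ (by exact_mod_cast hp.one_le) hk.ne'
  have hδs : (q + 1) * δ ≤ s - 1 := by nlinarith
  have hr0 : r ≠ 0 := by rw [hr]; intro h; omega
  have key : ∀ m : ℤ, -((q + 1) * δ) ≤ m → m ≤ (q + 1) * δ → ¬ (N ∣ r * (s + m)) := by
    intro m h1 h2 hdvd
    rw [hN, mul_dvd_mul_iff_left hr0] at hdvd
    have h3 : 0 < s + m := by linarith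
    have h4 := Int.le_of_dvd h3 hdvd
    rw [hn] at h4
    linarith
  have hqpos : (0 : ℤ) ≤ q := by linarith
  constructor
  · intro i j hi hiδ hj hjδ
    have hqi1 : q * i ≤ q * δ := mul_le_mul_of_nonneg_left hiδ hqpos
    have hqi0 : 0 ≤ q * i := mul_nonneg hqpos hi
    constructor
    · intro h
      have hdvd := h.dvd
      have heq : (s - r * j) - (-q * (s - r * i)) = r * (s + (-(q * i + j))) := by
        rw [hr]; ring
      rw [heq] at hdvd
      exact key _ (by nlinarith) (by nlinarith) hdvd
    · intro h
      have hdvd := h.dvd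
      have heq : (s + r * j) - (-q * (s - r * i)) = r * (s + (j - q * i)) := by
        rw [hr]; ring
      rw [heq] at hdvd
      exact key _ (by nlinarith) (by nlinarith) hdvd
  · rw [Set.eq_empty_iff_forall_notMem]
    rintro x ⟨⟨i, hi1, hi2, hx⟩, ⟨z, ⟨i', h1, h2, hz⟩, hxz⟩⟩
    have e1 : (-q * ((s + r * i') % N)) % N = (-q * (s + r * i')) % N := by
      conv_rhs => rw [Int.mul_emod]
      rw [Int.mul_emod, Int.emod_emod_of_dvd _ dvd_rfl]
    have hmod : -q * (s + r * i') ≡ s + r * i [ZMOD N] := by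
      show (-q * (s + r * i')) % N = (s + r * i) % N
      rw [← e1, ← hz, ← hxz, hx]
    have hdvd := hmod.dvd
    have heq : (s + r * i) - (-q * (s + r * i')) = r * (s + (q * i' + i)) := by
      rw [hr]; ring
    rw [heq] at hdvd
    have hqi1 : q * i' ≤ q * δ := mul_le_mul_of_nonneg_left h2 hqpos
    have hqi2 : q * (-δ) ≤ q * i' := mul_le_mul_of_nonneg_left h1 hqpos
    exact key _ (by nlinarith) (by nlinarith) hdvd
end

section
/- The code C contains its Hermitian dual: C^⊥h ⊆ C. -/
set_option synthInstance.maxHeartbeats 400000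
set_option maxHeartbeats 2000000

/-- The constacyclic code `C` (of length `n = q²+1`, with defining set
`{s + ri : −δ ≤ i ≤ δ}`) contains its Hermitian dual: `C^⊥h ⊆ C`. -/
theorem constacyclic_code_dual_containing
    (q : ℕ) (hq : ∃ p k : ℕ, Nat.Prime p ∧ Odd p ∧ 0 < k ∧ q = p ^ k)
    (n N s δ : ℕ) (hn : n = q ^ 2 + 1) (hN : N = (q + 1) * n)
    (hs : 2 * s = q ^ 2 + 1) (hδ : 2 * δ ≤ q - 1)
    (F : Type*) [Field F] [Fintype F] [DecidableEq F] (hF : Fintype.card F = q ^ 4)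
    (β : F) (hβ : IsPrimitiveRoot β N)
    (K : Subfield F) (hK : ∀ x : F, x ∈ K ↔ x ^ (q ^ 2) = x)
    (C : Submodule K (Fin n → K))
    (hC : ∀ c : Fin n → K, c ∈ C ↔ ∀ i : ℤ, -(δ : ℤ) ≤ i → i ≤ (δ : ℤ) →
      ∑ k : Fin n, (c k : F) * β ^ ((((s : ℤ) + ((q : ℤ) + 1) * i)) * ((k : ℕ) : ℤ)) = 0) :
    ∀ x : Fin n → K, (∀ y ∈ C, ∑ k : Fin n, x k * (y k) ^ q = 0) → x ∈ C := by
  intro x hx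
  obtain ⟨p, κ, hp, hpodd, hκ, hqpk⟩ := hq
  -- basic numeric facts
  have hp3 : 3 ≤ p := by
    have := hp.two_le
    rcases hpodd with ⟨t, ht⟩
    omega
  have hq3 : 3 ≤ q := by
    calc 3 ≤ p := hp3
    _ ≤ p ^ κ := Nat.le_self_pow (by omega) p
    _ = q := hqpk.symm
  have hqodd : Odd q := by rw [hqpk]; exact hpodd.pow
  have hN0 : 0 < N := by rw [hN, hn]; positivity
  -- characteristic
  haveI : Fact p.Prime := ⟨hp⟩
  obtain ⟨mm, hrcp, hcardm⟩ := FiniteField.card F (ringChar F)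
  have hpeq : ringChar F = p := by
    have hdvd : p ∣ ringChar F ^ (mm : ℕ) := by
      rw [← hcardm, hF, hqpk, ← pow_mul]
      exact dvd_pow (dvd_refl p) (by positivity)
    have := hp.dvd_of_dvd_pow hdvd
    exact ((Nat.prime_dvd_prime_iff_eq hp hrcp).mp this).symm
  haveI hcharp : CharP F p := by rw [← hpeq]; exact ringChar.charP F
  -- n is invertible in F
  have hnF : (n : F) ≠ 0 := by
    rw [Ne, CharP.cast_eq_zero_iff F p]
    intro hdvd
    have hpq : p ∣ q ^ 2 := by
      rw [hqpk, ← pow_mul]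
      exact dvd_pow (dvd_refl p) (by omega)
    rw [hn] at hdvd
    have h1 : p ∣ 1 := (Nat.dvd_add_right hpq).mp hdvd
    have := Nat.le_of_dvd one_pos h1
    omega
  -- β facts
  have hβNone : β ^ (N : ℤ) = 1 := hβ.zpow_eq_one
  have hβ0 : β ≠ 0 := by
    intro h
    have := hβ.pow_eq_one
    rw [h, zero_pow (by omega)] at this
    exact zero_ne_one this
  have hone : ∀ t : ℤ, β ^ t = 1 ↔ (N : ℤ) ∣ t := fun t => hβ.zpow_eq_one_iff_dvd t
  have hE : ∀ a b : ℤ, (N : ℤ) ∣ a - b → β ^ a = β ^ b := by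
    rintro a b ⟨t, ht⟩
    have h1 : β ^ a = β ^ b * β ^ (a - b) := by
      rw [← zpow_add₀ hβ0]; ring_nf
    rw [h1, ht, zpow_mul, hβNone, one_zpow, mul_one]
  -- geometric sum vanishing
  have hgeom : ∀ t : ℤ, ((N : ℤ) ∣ t * n) → ¬ ((N : ℤ) ∣ t) →
      ∑ k : Fin n, β ^ (t * ((k : ℕ) : ℤ)) = 0 := by
    intro t h1 h2
    have hx1 : β ^ t ≠ 1 := fun h => h2 ((hone t).mp h)
    have hsum : ∑ k : Fin n, β ^ (t * ((k : ℕ) : ℤ)) = ∑ k ∈ Finset.range n, (β ^ t) ^ k := by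
      rw [Fin.sum_univ_eq_sum_range (fun k => β ^ (t * (k : ℤ))) n]
      refine Finset.sum_congr rfl fun k _ => ?_
      rw [← zpow_natCast (β ^ t), ← zpow_mul]
    rw [hsum, geom_sum_eq hx1]
    have hpow : (β ^ t) ^ n = 1 := by
      rw [← zpow_natCast (β ^ t), ← zpow_mul]
      exact (hone _).mpr h1
    rw [hpow, sub_self, zero_div]
  -- an element a with a^{q²} ≠ a
  obtain ⟨g, hg⟩ := IsCyclic.exists_generator (α := Fˣ)
  have horder : orderOf g = q ^ 4 - 1 := by
    rw [orderOf_eq_card_of_forall_mem_zpowers hg, Nat.card_eq_fintype_card,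
      Fintype.card_units, hF]
  have ha : ((g : F)) ^ q ^ 2 ≠ (g : F) := by
    intro h
    have hgu : g ^ q ^ 2 = g := Units.ext (by push_cast; exact h)
    have h9 : 9 ≤ q ^ 2 := by nlinarith
    have hgo : g ^ (q ^ 2 - 1) = 1 := by
      have h1 : g ^ (q ^ 2 - 1) * g = 1 * g := by
        rw [← pow_succ, one_mul, show q ^ 2 - 1 + 1 = q ^ 2 by omega, hgu]
      exact mul_right_cancel h1
    have hdvd := orderOf_dvd_of_pow_eq_one hgo
    rw [horder] at hdvd
    have hle := Nat.le_of_dvd (by omega) hdvd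
    have hlt : q ^ 2 < q ^ 4 := by nlinarith
    omega
  set a : F := (g : F) with ha_def
  -- Frobenius helpers
  have hq2p : q ^ 2 = p ^ (2 * κ) := by rw [hqpk, ← pow_mul]; ring_nf
  have hfrob2 : ∀ u v : F, (u + v) ^ q ^ 2 = u ^ q ^ 2 + v ^ q ^ 2 := by
    intro u v; rw [hq2p]; exact add_pow_char_pow u v p (2 * κ)
  have hfrob1 : ∀ u v : F, (u + v) ^ q = u ^ q + v ^ q := by
    intro u v; rw [hqpk]; exact add_pow_char_pow u v p κ
  have hfrobsub : ∀ u v : F, (u - v) ^ q = u ^ q - v ^ q := by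
    intro u v; rw [hqpk]; exact sub_pow_char_pow (p := p) u v κ
  have hq4pow : ∀ α : F, α ^ (q ^ 4) = α := by
    intro α; rw [← hF]; exact FiniteField.pow_card α
  have hzp : ∀ (t : ℤ) (c : ℕ), (β ^ t) ^ c = β ^ (t * c) := by
    intro t c; rw [← zpow_natCast (β ^ t), ← zpow_mul]
  -- integer casts
  have hnz : (n : ℤ) = (q : ℤ) ^ 2 + 1 := by exact_mod_cast hn
  have hNz : (N : ℤ) = ((q : ℤ) + 1) * ((q : ℤ) ^ 2 + 1) := by
    rw [← hnz]; exact_mod_cast hN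
  have hNn : (N : ℤ) = ((q : ℤ) + 1) * (n : ℤ) := by rw [hNz, hnz]
  have hsz : 2 * (s : ℤ) = (q : ℤ) ^ 2 + 1 := by exact_mod_cast hs
  have hδz : 2 * (δ : ℤ) ≤ (q : ℤ) - 1 := by
    have h1 : 2 * δ + 1 ≤ q := by omega
    have := (Int.ofNat_le).mpr h1
    push_cast at this ⊢
    omega
  have hQ3 : (3 : ℤ) ≤ (q : ℤ) := by exact_mod_cast hq3
  obtain ⟨w, hw⟩ : ∃ w : ℤ, (q : ℤ) = 2 * w + 1 := by
    rcases hqodd with ⟨t, ht⟩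
    exact ⟨(t : ℤ), by exact_mod_cast ht⟩
  set Q : ℤ := (q : ℤ) with hQdef
  set S : ℤ := (s : ℤ) with hSdef
  have hF1 : (N : ℤ) ∣ Q ^ 4 - 1 := ⟨Q - 1, by rw [hNz]; ring⟩
  have hcast1 : ((q : ℕ) : ℤ) = Q := rfl
  have hcast2 : ((q ^ 2 : ℕ) : ℤ) = Q ^ 2 := by push_cast; rfl
  -- the key BCH condition
  have hkey : ∀ j ι : ℤ, -(δ : ℤ) ≤ j → j ≤ (δ : ℤ) → -(δ : ℤ) ≤ ι → ι ≤ (δ : ℤ) →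
      ¬ ((N : ℤ) ∣ (S + (Q + 1) * ι) + Q * (S + (Q + 1) * j)) := by
    intro j ι hj1 hj2 hι1 hι2 hdvd
    have heq : (S + (Q + 1) * ι) + Q * (S + (Q + 1) * j) = (Q + 1) * (S + ι + Q * j) := by ring
    rw [heq, hNz] at hdvd
    have hQ1 : (Q + 1 : ℤ) ≠ 0 := by omega
    have h2 : (Q ^ 2 + 1 : ℤ) ∣ (S + ι + Q * j) := (mul_dvd_mul_iff_left hQ1).mp hdvd
    have hQ0 : (0 : ℤ) ≤ Q := by omega
    have hm1 : Q * (-(δ : ℤ)) ≤ Q * j := mul_le_mul_of_nonneg_left hj1 hQ0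
    have hm2 : Q * j ≤ Q * (δ : ℤ) := mul_le_mul_of_nonneg_left hj2 hQ0
    have hm3 : Q * (2 * (δ : ℤ)) ≤ Q * (Q - 1) := mul_le_mul_of_nonneg_left hδz hQ0
    have hpos : 0 < S + ι + Q * j := by nlinarith
    have hlt : S + ι + Q * j < Q ^ 2 + 1 := by nlinarith
    have := Int.le_of_dvd hpos h2
    omega
  -- conjugation congruence: q² e_ι ≡ e_{-ι} (mod N)
  have hsN : 2 * (S * (Q ^ 2 - 1)) = (N : ℤ) * (Q - 1) := by
    rw [hNz]; linear_combination (Q ^ 2 - 1) * hsz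
  have hsN2 : S * (Q ^ 2 - 1) = (N : ℤ) * w := by
    have h2 : 2 * (S * (Q ^ 2 - 1)) = 2 * ((N : ℤ) * w) := by rw [hsN, hw]; ring
    exact mul_left_cancel₀ two_ne_zero h2
  have hconj : ∀ ι : ℤ, (N : ℤ) ∣ Q ^ 2 * (S + (Q + 1) * ι) - (S + (Q + 1) * (-ι)) := by
    intro ι
    exact ⟨w + ι, by linear_combination hsN2 - ι * hNz⟩
  -- set up the target
  rw [hC]
  intro i hi1 hi2
  set e : ℤ := S + (Q + 1) * i with he_def
  set m : ℤ := Q ^ 3 * e with hm_def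
  -- divisibility facts for membership of the trace codewords
  have d1 : ∀ j : ℤ, (N : ℤ) ∣ (m + (S + (Q + 1) * j)) * (n : ℤ) := by
    intro j
    have hr : (Q + 1) ∣ (m + (S + (Q + 1) * j)) :=
      ⟨(Q ^ 2 - Q + 1) * S + (Q ^ 3 * i + j), by rw [hm_def, he_def]; ring⟩
    obtain ⟨c, hc⟩ := hr
    exact ⟨c, by rw [hc, hNn]; ring⟩
  have d1' : ∀ j : ℤ, (N : ℤ) ∣ (Q ^ 2 * m + (S + (Q + 1) * j)) * (n : ℤ) := by
    intro j
    have hr : (Q + 1) ∣ (Q ^ 2 * m + (S + (Q + 1) * j)) :=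
      ⟨(Q ^ 4 - Q ^ 3 + Q ^ 2 - Q + 1) * S +
        (Q ^ 5 * i + j), by rw [hm_def, he_def]; ring⟩
    obtain ⟨c, hc⟩ := hr
    exact ⟨c, by rw [hc, hNn]; ring⟩
  have d2 : ∀ j : ℤ, -(δ : ℤ) ≤ j → j ≤ (δ : ℤ) → ¬ ((N : ℤ) ∣ (m + (S + (Q + 1) * j))) := by
    intro j hj1 hj2 hdvd
    have h1 : (N : ℤ) ∣ Q * (m + (S + (Q + 1) * j)) := hdvd.mul_left Q
    have h2 : (N : ℤ) ∣ (Q ^ 4 - 1) * e := hF1.mul_right e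
    have h3 : (N : ℤ) ∣ (S + (Q + 1) * i) + Q * (S + (Q + 1) * j) := by
      have heq : (S + (Q + 1) * i) + Q * (S + (Q + 1) * j)
          = Q * (m + (S + (Q + 1) * j)) - (Q ^ 4 - 1) * e := by
        rw [hm_def, he_def]; ring
      rw [heq]; exact dvd_sub h1 h2
    exact hkey j i hj1 hj2 hi1 hi2 h3
  have d2' : ∀ j : ℤ, -(δ : ℤ) ≤ j → j ≤ (δ : ℤ) →
      ¬ ((N : ℤ) ∣ (Q ^ 2 * m + (S + (Q + 1) * j))) := by
    intro j hj1 hj2 hdvd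
    have h1 : (N : ℤ) ∣ Q * (Q ^ 2 * m + (S + (Q + 1) * j)) := hdvd.mul_left Q
    have h2 : (N : ℤ) ∣ Q ^ 2 * ((Q ^ 4 - 1) * e) := (hF1.mul_right e).mul_left (Q ^ 2)
    have h3 := hconj i
    have h4 : (N : ℤ) ∣ (S + (Q + 1) * (-i)) + Q * (S + (Q + 1) * j) := by
      have heq : (S + (Q + 1) * (-i)) + Q * (S + (Q + 1) * j)
          = Q * (Q ^ 2 * m + (S + (Q + 1) * j)) - Q ^ 2 * ((Q ^ 4 - 1) * e)
            - (Q ^ 2 * (S + (Q + 1) * i) - (S + (Q + 1) * (-i))) := by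
        rw [hm_def, he_def]; ring
      rw [heq]
      exact dvd_sub (dvd_sub h1 h2) h3
    exact hkey j (-i) hj1 hj2 (by omega) (by omega) h4
  -- trace codewords
  have main : ∀ α : F,
      α ^ q * (∑ k : Fin n, ((x k : F)) * β ^ ((Q * m) * ((k : ℕ) : ℤ)))
      + (α ^ q ^ 2) ^ q * (∑ k : Fin n, ((x k : F)) * β ^ ((Q ^ 3 * m) * ((k : ℕ) : ℤ))) = 0 := by
    intro α
    -- the vector
    have hyvK : ∀ k : Fin n,
        (α * β ^ (m * ((k : ℕ) : ℤ)) + α ^ q ^ 2 * β ^ ((Q ^ 2 * m) * ((k : ℕ) : ℤ))) ∈ K := by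
      intro k
      rw [hK, hfrob2]
      have p1 : (α * β ^ (m * ((k : ℕ) : ℤ))) ^ q ^ 2
          = α ^ q ^ 2 * β ^ ((Q ^ 2 * m) * ((k : ℕ) : ℤ)) := by
        rw [mul_pow, hzp, hcast2,
          show m * ((k : ℕ) : ℤ) * Q ^ 2 = (Q ^ 2 * m) * ((k : ℕ) : ℤ) from by ring]
      have p2 : (α ^ q ^ 2 * β ^ ((Q ^ 2 * m) * ((k : ℕ) : ℤ))) ^ q ^ 2
          = α * β ^ (m * ((k : ℕ) : ℤ)) := by
        rw [mul_pow, hzp, hcast2, ← pow_mul]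
        have hq4 : q ^ 2 * q ^ 2 = q ^ 4 := by ring
        rw [hq4, hq4pow]
        congr 1
        apply hE
        rw [show (Q ^ 2 * m) * ((k : ℕ) : ℤ) * Q ^ 2 - m * ((k : ℕ) : ℤ)
            = (Q ^ 4 - 1) * (m * ((k : ℕ) : ℤ)) from by ring]
        exact hF1.mul_right _
      rw [p1, p2, add_comm]
    set y : Fin n → K := fun k =>
      ⟨α * β ^ (m * ((k : ℕ) : ℤ)) + α ^ q ^ 2 * β ^ ((Q ^ 2 * m) * ((k : ℕ) : ℤ)), hyvK k⟩
      with hy_def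
    have hyC : y ∈ C := by
      rw [hC]
      intro j hj1 hj2
      have hterm : ∀ k : Fin n,
          ((y k : F)) * β ^ ((S + (Q + 1) * j) * ((k : ℕ) : ℤ))
          = α * β ^ ((m + (S + (Q + 1) * j)) * ((k : ℕ) : ℤ))
            + α ^ q ^ 2 * β ^ ((Q ^ 2 * m + (S + (Q + 1) * j)) * ((k : ℕ) : ℤ)) := by
        intro k
        show (α * β ^ (m * ((k : ℕ) : ℤ)) + α ^ q ^ 2 * β ^ ((Q ^ 2 * m) * ((k : ℕ) : ℤ)))
            * β ^ ((S + (Q + 1) * j) * ((k : ℕ) : ℤ)) = _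
        rw [add_mul m (S + (Q + 1) * j), add_mul (Q ^ 2 * m) (S + (Q + 1) * j),
          zpow_add₀ hβ0, zpow_add₀ hβ0]
        ring
      calc ∑ k : Fin n, ((y k : F)) * β ^ ((S + (Q + 1) * j) * ((k : ℕ) : ℤ))
          = ∑ k : Fin n, (α * β ^ ((m + (S + (Q + 1) * j)) * ((k : ℕ) : ℤ))
            + α ^ q ^ 2 * β ^ ((Q ^ 2 * m + (S + (Q + 1) * j)) * ((k : ℕ) : ℤ))) :=
            Finset.sum_congr rfl fun k _ => hterm k
        _ = α * (∑ k : Fin n, β ^ ((m + (S + (Q + 1) * j)) * ((k : ℕ) : ℤ)))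
            + α ^ q ^ 2 * (∑ k : Fin n, β ^ ((Q ^ 2 * m + (S + (Q + 1) * j)) * ((k : ℕ) : ℤ))) := by
            rw [Finset.sum_add_distrib, Finset.mul_sum, Finset.mul_sum]
        _ = 0 := by
            rw [hgeom _ (d1 j) (d2 j hj1 hj2), hgeom _ (d1' j) (d2' j hj1 hj2)]
            ring
    have hxy := hx y hyC
    have h0 : ((∑ k : Fin n, x k * (y k) ^ q : K) : F) = 0 := by
      rw [hxy]; exact rfl
    rw [AddSubmonoidClass.coe_finset_sum] at h0
    have h1 : ∀ k : Fin n, ((x k * (y k) ^ q : K) : F)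
        = (x k : F) * (α ^ q * β ^ ((Q * m) * ((k : ℕ) : ℤ))
          + (α ^ q ^ 2) ^ q * β ^ ((Q ^ 3 * m) * ((k : ℕ) : ℤ))) := by
      intro k
      push_cast
      congr 1
      show (α * β ^ (m * ((k : ℕ) : ℤ)) + α ^ q ^ 2 * β ^ ((Q ^ 2 * m) * ((k : ℕ) : ℤ))) ^ q = _
      rw [hfrob1, mul_pow, mul_pow, hzp, hzp, hcast1,
        show m * ((k : ℕ) : ℤ) * Q = (Q * m) * ((k : ℕ) : ℤ) from by ring,
        show (Q ^ 2 * m) * ((k : ℕ) : ℤ) * Q = (Q ^ 3 * m) * ((k : ℕ) : ℤ) from by ring]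
    rw [Finset.sum_congr rfl fun k _ => h1 k] at h0
    calc α ^ q * (∑ k : Fin n, ((x k : F)) * β ^ ((Q * m) * ((k : ℕ) : ℤ)))
        + (α ^ q ^ 2) ^ q * (∑ k : Fin n, ((x k : F)) * β ^ ((Q ^ 3 * m) * ((k : ℕ) : ℤ)))
        = ∑ k : Fin n, (x k : F) * (α ^ q * β ^ ((Q * m) * ((k : ℕ) : ℤ))
          + (α ^ q ^ 2) ^ q * β ^ ((Q ^ 3 * m) * ((k : ℕ) : ℤ))) := by
          rw [Finset.mul_sum, Finset.mul_sum, ← Finset.sum_add_distrib]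
          exact Finset.sum_congr rfl fun k _ => by ring
      _ = 0 := h0
  -- extract the conclusion
  have h1 := main 1
  simp only [one_pow, one_mul] at h1
  have h2 := main a
  have hBA : (∑ k : Fin n, ((x k : F)) * β ^ ((Q ^ 3 * m) * ((k : ℕ) : ℤ)))
      = - (∑ k : Fin n, ((x k : F)) * β ^ ((Q * m) * ((k : ℕ) : ℤ))) := by
    linear_combination h1
  rw [hBA] at h2
  have h3 : (a ^ q - (a ^ q ^ 2) ^ q)
      * (∑ k : Fin n, ((x k : F)) * β ^ ((Q * m) * ((k : ℕ) : ℤ))) = 0 := by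
    linear_combination h2
  have hne : a ^ q - (a ^ q ^ 2) ^ q ≠ 0 := by
    rw [← hfrobsub]
    apply pow_ne_zero
    rw [sub_ne_zero]
    exact Ne.symm ha
  have hA : (∑ k : Fin n, ((x k : F)) * β ^ ((Q * m) * ((k : ℕ) : ℤ))) = 0 :=
    (mul_eq_zero.mp h3).resolve_left hne
  calc ∑ k : Fin n, ((x k : F)) * β ^ ((S + (Q + 1) * i) * ((k : ℕ) : ℤ))
      = ∑ k : Fin n, ((x k : F)) * β ^ ((Q * m) * ((k : ℕ) : ℤ)) := by
        refine Finset.sum_congr rfl fun k _ => ?_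
        congr 1
        apply hE
        have : (S + (Q + 1) * i) * ((k : ℕ) : ℤ) - (Q * m) * ((k : ℕ) : ℤ)
            = -((Q ^ 4 - 1) * (e * ((k : ℕ) : ℤ))) := by rw [hm_def, he_def]; ring
        rw [this]
        exact (hF1.mul_right _).neg_right
    _ = 0 := hA
end

section
/- For an integer j with 0 ≤ j ≤ n − 1, the congruence q²·(1 + rj) ≡ 1 + rj (mod N) holds if and only if j = (q−1)/2; in other words, s = (q²+1)/2 is the unique element of {1 + rj : 0 ≤ j ≤ n−1} that is fixed modulo N under multiplication by q². -/
/-- For an integer `j` with `0 ≤ j ≤ n − 1`, the congruence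
`q²·(1 + rj) ≡ 1 + rj (mod N)` holds iff `j = (q−1)/2`; in other words `s = (q²+1)/2` is the
unique element of `{1 + rj : 0 ≤ j ≤ n−1}` fixed modulo `N` under multiplication by `q²`. -/
theorem fixed_point_iff
    (q m : ℤ) (hq : ∃ p k : ℕ, Nat.Prime p ∧ Odd p ∧ 0 < k ∧ q = (p : ℤ) ^ k)
    (hm : 1 ≤ m) (hform : q = 10 * m + 3 ∨ q = 10 * m + 7)
    (n r N s : ℤ) (hn : 10 * n = q ^ 2 + 1) (hr : r = q + 1) (hN : N = r * n)
    (hs : 2 * s = q ^ 2 + 1)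
    (j : ℤ) (hj0 : 0 ≤ j) (hj1 : j ≤ n - 1) :
    (q ^ 2 * (1 + r * j) ≡ 1 + r * j [ZMOD N]) ↔ 2 * j = q - 1 := by
  obtain ⟨p, k, hp, hpodd, hk, hqpk⟩ := hq
  have hqodd : Odd q := by
    rw [hqpk]
    exact ((Int.odd_coe_nat p).mpr hpodd).pow
  obtain ⟨t, ht⟩ := hqodd
  have hq13 : 13 ≤ q := by rcases hform with h | h <;> omega
  have hn0 : 0 < n := by nlinarith
  have hr0 : 0 < r := by omega
  subst hr hN
  -- parity of n : 5n is odd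
  have h5 : 5 * n = 2 * (t * t + t) + 1 := by nlinarith
  have key : (q ^ 2 * (1 + (q + 1) * j) ≡ 1 + (q + 1) * j [ZMOD (q + 1) * n]) ↔
      n ∣ (q - 1 - 2 * j) := by
    constructor
    · intro h
      have hd : (q + 1) * n ∣ (1 + (q + 1) * j) - q ^ 2 * (1 + (q + 1) * j) := h.dvd
      have hd2 : (q + 1) * n ∣ (q + 1) * (q - 1 - 2 * j + 10 * n * j) := by
        have heq : (q + 1) * (q - 1 - 2 * j + 10 * n * j) =
            -((1 + (q + 1) * j) - q ^ 2 * (1 + (q + 1) * j)) := by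
          linear_combination (q + 1) * j * hn
        rw [heq]
        exact hd.neg_right
      have hd3 : n ∣ (q - 1 - 2 * j + 10 * n * j) :=
        (mul_dvd_mul_iff_left (by positivity : (q + 1) ≠ 0)).mp hd2
      obtain ⟨c, hc⟩ := hd3
      exact ⟨c - 10 * j, by linarith⟩
    · intro h
      obtain ⟨c, hc⟩ := h
      apply Int.modEq_iff_dvd.mpr
      exact ⟨-(c + 10 * j), by linear_combination (q + 1) * j * hn - (q + 1) * hc⟩
  rw [key]
  constructor
  · intro h
    obtain ⟨c, hc⟩ := h
    have hqn : q - 1 < n := by nlinarith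
    have hlb : -2 * n < q - 1 - 2 * j := by nlinarith
    have hc1 : c < 1 := by nlinarith
    have hc2 : -2 < c := by nlinarith
    interval_cases c <;> omega
  · intro h
    exact ⟨0, by omega⟩
end

section
/- Let a = (n−1)/2. For each integer k with 0 ≤ k ≤ a − 1, the set {s − r(a−k) mod N, s + r(a−k) mod N} has exactly two elements, and for integers i, j with 0 ≤ i < j ≤ a − 1 the sets {s − r(a−i) mod N, s + r(a−i) mod N} and {s − r(a−j) mod N, s + r(a−j) mod N} are disjoint. -/
lemma key_ne (n r : ℤ) (hn : 0 < n) (hr : 0 < r) (t u v : ℤ)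
    (ht0 : 0 < t) (ht : t < n) (huv : v - u = r * t) :
    u % (r * n) ≠ v % (r * n) := by
  intro h
  have hmod : Int.ModEq (r * n) u v := h
  have hdvd : r * n ∣ v - u := Int.ModEq.dvd hmod
  rw [huv] at hdvd
  obtain ⟨c, hc⟩ := hdvd
  have : t = n * c := by
    have : r * t = r * (n * c) := by linarith [hc]
    exact mul_left_cancel₀ hr.ne' this
  have : n ∣ t := ⟨c, this⟩
  have := Int.le_of_dvd ht0 this
  linarith

/-- Let `a = (n−1)/2`. For each `0 ≤ k ≤ a − 1`, the set
`{s − r(a−k) mod N, s + r(a−k) mod N}` has exactly two elements, and for `0 ≤ i < j ≤ a − 1`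
the corresponding two-element sets are disjoint. -/
theorem pairs_two_elements_and_disjoint
    (q m : ℤ) (hq : ∃ p k : ℕ, Nat.Prime p ∧ Odd p ∧ 0 < k ∧ q = (p : ℤ) ^ k)
    (hm : 1 ≤ m) (hform : q = 10 * m + 3 ∨ q = 10 * m + 7)
    (n r N s a : ℤ) (hn : 10 * n = q ^ 2 + 1) (hr : r = q + 1) (hN : N = r * n)
    (hs : 2 * s = q ^ 2 + 1) (ha : 2 * a = n - 1) :
    (∀ k : ℤ, 0 ≤ k → k ≤ a - 1 →
        (s - r * (a - k)) % N ≠ (s + r * (a - k)) % N) ∧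
    (∀ i j : ℤ, 0 ≤ i → i < j → j ≤ a - 1 →
        (({(s - r * (a - i)) % N, (s + r * (a - i)) % N} : Set ℤ) ∩
          {(s - r * (a - j)) % N, (s + r * (a - j)) % N}) = ∅) := by
  have hq13 : 13 ≤ q := by rcases hform with h | h <;> linarith
  have hnpos : 0 < n := by nlinarith
  have hrpos : 0 < r := by linarith
  subst hN
  constructor
  · intro k hk0 hk1
    exact key_ne n r hnpos hrpos (2 * (a - k)) _ _ (by linarith) (by linarith)
      (by ring)
  · intro i j hi hij hj
    rw [Set.eq_empty_iff_forall_notMem]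
    rintro x ⟨h1, h2⟩
    simp only [Set.mem_insert_iff, Set.mem_singleton_iff] at h1 h2
    rcases h1 with h1 | h1 <;> rcases h2 with h2 | h2 <;> subst h1
    · exact key_ne n r hnpos hrpos (j - i) _ _ (by linarith) (by linarith)
        (by ring) h2
    · exact key_ne n r hnpos hrpos (2 * a - i - j) _ _ (by linarith) (by linarith)
        (by ring) h2
    · exact key_ne n r hnpos hrpos (2 * a - i - j) _ _ (by linarith) (by linarith)
        (by ring) h2.symm
    · exact key_ne n r hnpos hrpos (j - i) _ _ (by linarith) (by linarith)
        (by ring) h2.symm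
end

section
/- Let a = (n−1)/2. The set {(1 + rj) mod N : 0 ≤ j ≤ n − 1} is the disjoint union of the singleton {s mod N} and the pairwise disjoint two-element sets {s − r(a−k) mod N, s + r(a−k) mod N} for 0 ≤ k ≤ a − 1; moreover each of these sets is a q²-cyclotomic coset modulo N (closed under multiplication by q²). -/
/-- Let `a = (n−1)/2`. The set `{(1 + rj) mod N : 0 ≤ j ≤ n − 1}` is the disjoint
union of the singleton `{s mod N}` and the pairwise disjoint two-element sets
`{s − r(a−k) mod N, s + r(a−k) mod N}` for `0 ≤ k ≤ a − 1`; moreover each of these sets is a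
`q²`-cyclotomic coset modulo `N`. -/
theorem theta_disjoint_union_of_cosets
    (q m : ℤ) (hq : ∃ p k : ℕ, Nat.Prime p ∧ Odd p ∧ 0 < k ∧ q = (p : ℤ) ^ k)
    (hm : 1 ≤ m) (hform : q = 10 * m + 3 ∨ q = 10 * m + 7)
    (n r N s a : ℤ) (hn : 10 * n = q ^ 2 + 1) (hr : r = q + 1) (hN : N = r * n)
    (hs : 2 * s = q ^ 2 + 1) (ha : 2 * a = n - 1) :
    ({x : ℤ | ∃ j : ℤ, 0 ≤ j ∧ j ≤ n - 1 ∧ x = (1 + r * j) % N}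
        = ({s % N} : Set ℤ) ∪
          ⋃ k ∈ Set.Icc (0 : ℤ) (a - 1),
            ({(s - r * (a - k)) % N, (s + r * (a - k)) % N} : Set ℤ)) ∧
    (∀ k ∈ Set.Icc (0 : ℤ) (a - 1),
        (s - r * (a - k)) % N ≠ (s + r * (a - k)) % N ∧
        s % N ∉ ({(s - r * (a - k)) % N, (s + r * (a - k)) % N} : Set ℤ)) ∧
    (∀ i ∈ Set.Icc (0 : ℤ) (a - 1), ∀ j ∈ Set.Icc (0 : ℤ) (a - 1), i ≠ j →
        (({(s - r * (a - i)) % N, (s + r * (a - i)) % N} : Set ℤ) ∩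
          {(s - r * (a - j)) % N, (s + r * (a - j)) % N}) = ∅) ∧
    ({x : ℤ | ∃ t : ℕ, x = (s * q ^ (2 * t)) % N} = {s % N}) ∧
    (∀ k ∈ Set.Icc (0 : ℤ) (a - 1),
        {x : ℤ | ∃ t : ℕ, x = ((s - r * (a - k)) * q ^ (2 * t)) % N}
          = ({(s - r * (a - k)) % N, (s + r * (a - k)) % N} : Set ℤ)) := by
  -- basic facts
  have hq13 : 13 ≤ q := by rcases hform with h | h <;> omega
  obtain ⟨c, hc⟩ : ∃ c : ℤ, q = 2 * c + 1 := by
    rcases hform with h | h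
    · exact ⟨5 * m + 1, by omega⟩
    · exact ⟨5 * m + 3, by omega⟩
  have hn0 : 0 < n := by nlinarith [sq_nonneg q]
  have hs5n : s = 5 * n := by linarith
  have hrne : r ≠ 0 := by omega
  have h2src : 2 * s = 2 * (1 + r * c) := by
    rw [hr]; linear_combination hs + (q + 1) * hc
  have hs1rc : s = 1 + r * c := by linarith
  -- key congruence lemmas
  have hkey : ∀ w u v : ℤ, n ∣ (u - v) → (w + r * u) % N = (w + r * v) % N := by
    intro w u v hd
    obtain ⟨e, he⟩ := hd
    have : (w + r * u) ≡ (w + r * v) [ZMOD N] := by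
      apply Int.modEq_iff_dvd.mpr
      exact ⟨-e, by linear_combination (-r) * he + e * hN⟩
    exact this
  have hkey2 : ∀ w u v : ℤ, (w + r * u) % N = (w + r * v) % N → n ∣ (u - v) := by
    intro w u v h
    have h' : (w + r * u) ≡ (w + r * v) [ZMOD N] := h
    have hd : N ∣ (w + r * v) - (w + r * u) := h'.dvd
    have hd2 : r * n ∣ r * (v - u) := by
      rw [← hN]
      have e : (w + r * v) - (w + r * u) = r * (v - u) := by ring
      rwa [e] at hd
    have hd3 : n ∣ v - u := (mul_dvd_mul_iff_left hrne).mp hd2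
    have e2 : u - v = -(v - u) := by ring
    rw [e2]; exact dvd_neg.mpr hd3
  have hswap : ∀ u : ℤ, ((s + r * u) * q ^ 2) % N = (s - r * u) % N := by
    intro u
    have ident : (s + r * u) * q ^ 2 - (s - r * u) = N * (5 * q - 5 + 10 * u) := by
      rw [hs5n, hN, hr]; linear_combination (-(q + 1) * u) * hn
    have : (s + r * u) * q ^ 2 ≡ (s - r * u) [ZMOD N] := by
      apply Int.modEq_iff_dvd.mpr
      exact ⟨-(5 * q - 5 + 10 * u), by linear_combination -ident⟩
    exact this
  have hswap' : ∀ u : ℤ, ((s - r * u) * q ^ 2) % N = (s + r * u) % N := by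
    intro u
    have h := hswap (-u)
    rw [show s + r * (-u) = s - r * u from by ring,
      show s - r * (-u) = s + r * u from by ring] at h
    exact h
  have hmul : ∀ x y : ℤ, x % N = y % N → (x * q ^ 2) % N = (y * q ^ 2) % N := by
    intro x y h
    have h' : x ≡ y [ZMOD N] := h
    exact h'.mul_right (q ^ 2)
  have horbit : ∀ (u : ℤ) (t : ℕ),
      ((s - r * u) * q ^ (2 * t)) % N = (s - r * u) % N ∨
      ((s - r * u) * q ^ (2 * t)) % N = (s + r * u) % N := by
    intro u t
    induction t with
    | zero => left; norm_num
    | succ t ih =>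
      have e : (s - r * u) * q ^ (2 * (t + 1)) = ((s - r * u) * q ^ (2 * t)) * q ^ 2 := by
        ring
      rw [e]
      rcases ih with h | h
      · right; rw [hmul _ _ h]; exact hswap' u
      · left; rw [hmul _ _ h]; exact hswap u
  have memA : ∀ u : ℤ, ∃ j : ℤ, 0 ≤ j ∧ j ≤ n - 1 ∧ (1 + r * u) % N = (1 + r * j) % N := by
    intro u
    refine ⟨u % n, Int.emod_nonneg u hn0.ne',
      by have := Int.emod_lt_of_pos u hn0; linarith, ?_⟩
    exact hkey 1 u (u % n) ⟨u / n, by have := Int.mul_ediv_add_emod u n; linarith⟩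
  refine ⟨?_, ?_, ?_, ?_, ?_⟩
  -- Part 1 : the set equality
  · ext x
    simp only [Set.mem_setOf_eq, Set.mem_union, Set.mem_singleton_iff, Set.mem_iUnion,
      Set.mem_insert_iff, Set.mem_Icc, exists_prop]
    constructor
    · rintro ⟨j, hj0, hj1, rfl⟩
      obtain ⟨d, hdd, hd0, hdn⟩ : ∃ d : ℤ, d = (j - c) % n ∧ 0 ≤ d ∧ d < n :=
        ⟨_, rfl, Int.emod_nonneg _ hn0.ne', Int.emod_lt_of_pos _ hn0⟩
      have hx : (1 + r * j) % N = (s + r * d) % N := by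
        rw [show (1 : ℤ) + r * j = s + r * (j - c) from by rw [hs1rc]; ring]
        refine hkey s (j - c) d ?_
        rw [hdd]
        exact ⟨(j - c) / n, by have := Int.mul_ediv_add_emod (j - c) n; linarith⟩
      clear hdd
      by_cases hd : d = 0
      · left; rw [hx, hd]; norm_num
      · right
        by_cases hda : d ≤ a
        · exact ⟨a - d, ⟨by omega, by omega⟩,
            Or.inr (by rw [show a - (a - d) = d from by ring]; exact hx)⟩
        · refine ⟨d - a - 1, ⟨by omega, by omega⟩, Or.inl ?_⟩
          rw [hx, show s - r * (a - (d - a - 1)) = s + r * (d - n) from by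
            rw [show n = 2 * a + 1 from by omega]; ring]
          exact hkey s d (d - n) ⟨1, by ring⟩
    · rintro (hx | ⟨k, ⟨hk0, hk1⟩, hx | hx⟩)
      · obtain ⟨j, h0, h1, hj⟩ := memA c
        exact ⟨j, h0, h1, by rw [hx, hs1rc]; exact hj⟩
      · obtain ⟨j, h0, h1, hj⟩ := memA (c - (a - k))
        refine ⟨j, h0, h1, ?_⟩
        rw [hx, show s - r * (a - k) = 1 + r * (c - (a - k)) from by rw [hs1rc]; ring]
        exact hj
      · obtain ⟨j, h0, h1, hj⟩ := memA (c + (a - k))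
        refine ⟨j, h0, h1, ?_⟩
        rw [hx, show s + r * (a - k) = 1 + r * (c + (a - k)) from by rw [hs1rc]; ring]
        exact hj
  -- Part 2 : each pair has two distinct elements, and s % N is not in it
  · intro k hk
    simp only [Set.mem_Icc] at hk
    constructor
    · intro h
      have h' : (s + r * (-(a - k))) % N = (s + r * (a - k)) % N := by
        rw [show s + r * (-(a - k)) = s - r * (a - k) from by ring]; exact h
      have h2 : n ∣ 2 * (a - k) := by
        have h3 := hkey2 s _ _ h'
        rw [show -(a - k) - (a - k) = -(2 * (a - k)) from by ring] at h3
        exact dvd_neg.mp h3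
      have hcop : IsCoprime (n : ℤ) 2 := ⟨1, -a, by linarith⟩
      have h3 : n ∣ (a - k) := hcop.dvd_of_dvd_mul_left h2
      have := Int.le_of_dvd (by omega) h3
      omega
    · intro hmem
      simp only [Set.mem_insert_iff, Set.mem_singleton_iff] at hmem
      rcases hmem with h | h
      · have h' : (s + r * (0 : ℤ)) % N = (s + r * (-(a - k))) % N := by
          rw [show s + r * (0 : ℤ) = s from by ring,
            show s + r * (-(a - k)) = s - r * (a - k) from by ring]
          exact h
        have h3 := hkey2 s _ _ h'
        rw [show (0 : ℤ) - (-(a - k)) = a - k from by ring] at h3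
        have := Int.le_of_dvd (by omega) h3
        omega
      · have h' : (s + r * (0 : ℤ)) % N = (s + r * (a - k)) % N := by
          rw [show s + r * (0 : ℤ) = s from by ring]; exact h
        have h3 := hkey2 s _ _ h'
        rw [show (0 : ℤ) - (a - k) = -(a - k) from by ring] at h3
        have h4 := dvd_neg.mp h3
        have := Int.le_of_dvd (by omega) h4
        omega
  -- Part 3 : pairwise disjointness
  · intro i hi j hj hij
    simp only [Set.mem_Icc] at hi hj
    have hsmall : ∀ d : ℤ, n ∣ d → -n < d → d < n → d = 0 := by
      rintro d ⟨w, rfl⟩ h1 h2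
      rcases lt_trichotomy w 0 with h | h | h
      · nlinarith
      · rw [h]; ring
      · nlinarith
    have hdist : ∀ u v : ℤ, (s + r * u) % N = (s + r * v) % N →
        -n < u - v → u - v < n → u = v := by
      intro u v h h1 h2
      have := hsmall _ (hkey2 s u v h) h1 h2
      linarith
    have hn2a : n = 2 * a + 1 := by omega
    rw [Set.eq_empty_iff_forall_notMem]
    rintro x ⟨hx1, hx2⟩
    simp only [Set.mem_insert_iff, Set.mem_singleton_iff] at hx1 hx2
    rcases hx1 with h1 | h1 <;> rcases hx2 with h2 | h2
    · have h := h1.symm.trans h2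
      rw [show s - r * (a - i) = s + r * (-(a - i)) from by ring,
        show s - r * (a - j) = s + r * (-(a - j)) from by ring] at h
      have := hdist _ _ h (by omega) (by omega)
      omega
    · have h := h1.symm.trans h2
      rw [show s - r * (a - i) = s + r * (-(a - i)) from by ring] at h
      have := hdist _ _ h (by omega) (by omega)
      omega
    · have h := h1.symm.trans h2
      rw [show s - r * (a - j) = s + r * (-(a - j)) from by ring] at h
      have := hdist _ _ h (by omega) (by omega)
      omega
    · have h := h1.symm.trans h2
      have := hdist _ _ h (by omega) (by omega)
      omega
  -- Part 4 : singleton coset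
  · ext x
    simp only [Set.mem_setOf_eq, Set.mem_singleton_iff]
    constructor
    · rintro ⟨t, rfl⟩
      have h0 := horbit 0 t
      rw [show s - r * (0 : ℤ) = s from by ring,
        show s + r * (0 : ℤ) = s from by ring] at h0
      rcases h0 with h | h <;> exact h
    · intro hx
      exact ⟨0, by rw [hx]; norm_num⟩
  -- Part 5 : pair cosets
  · intro k hk
    ext x
    simp only [Set.mem_setOf_eq, Set.mem_insert_iff, Set.mem_singleton_iff]
    constructor
    · rintro ⟨t, rfl⟩
      exact horbit (a - k) t
    · rintro (hx | hx)
      · exact ⟨0, by rw [hx]; norm_num⟩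
      · refine ⟨1, ?_⟩
        rw [hx, show (2 * 1 : ℕ) = 2 from rfl]
        exact (hswap' (a - k)).symm
end

section
/- Let a = (n−1)/2 and let Z = {s − r(a−j) : 0 ≤ j ≤ 2m−1} ∪ {s + r(a−j) : 0 ≤ j ≤ 2m−1}. Then, modulo N, Z equals the arithmetic progression {(s + r(a − 2m + 1 + t)) mod N : 0 ≤ t ≤ 4m − 1} of 4m consecutive terms with common difference r; in particular s + ra + r ≡ s − ra (mod N), and Z has exactly 4m elements modulo N. -/
/-- Let `a = (n−1)/2` and `Z = {s − r(a−j) : 0 ≤ j ≤ 2m−1} ∪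
{s + r(a−j) : 0 ≤ j ≤ 2m−1}`. Then, modulo `N`, `Z` equals the arithmetic progression
`{s + r(a − 2m + 1 + t) mod N : 0 ≤ t ≤ 4m − 1}`; in particular
`s + ra + r ≡ s − ra (mod N)`, and `Z` has exactly `4m` elements modulo `N`. -/
theorem defining_set_is_progression
    (q m : ℤ) (hq : ∃ p k : ℕ, Nat.Prime p ∧ Odd p ∧ 0 < k ∧ q = (p : ℤ) ^ k)
    (hm : 1 ≤ m) (hform : q = 10 * m + 3 ∨ q = 10 * m + 7)
    (n r N s a : ℤ) (hn : 10 * n = q ^ 2 + 1) (hr : r = q + 1) (hN : N = r * n)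
    (hs : 2 * s = q ^ 2 + 1) (ha : 2 * a = n - 1)
    (Z : Finset ℤ)
    (hZ : Z = ((Finset.Icc (0 : ℤ) (2 * m - 1)).image fun j => (s - r * (a - j)) % N) ∪
              ((Finset.Icc (0 : ℤ) (2 * m - 1)).image fun j => (s + r * (a - j)) % N)) :
    Z = (Finset.Icc (0 : ℤ) (4 * m - 1)).image
          (fun t => (s + r * (a - 2 * m + 1 + t)) % N) ∧
    (s + r * a + r ≡ s - r * a [ZMOD N]) ∧
    (Z.card : ℤ) = 4 * m := by
  have hn' : n = 2 * a + 1 := by omega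
  have hr0 : 0 < r := by rcases hform with h | h <;> omega
  have hn4 : 4 * m ≤ n := by rcases hform with h | h <;> nlinarith
  have hkey : ∀ j : ℤ, (s - r * (a - j)) % N = (s + r * (a - 2 * m + 1 + (2 * m + j))) % N := by
    intro j
    have h1 : s + r * (a - 2 * m + 1 + (2 * m + j)) = (s - r * (a - j)) + 1 * N := by
      rw [hN, hn']; ring
    rw [h1, Int.add_mul_emod_self_right]
  have hZeq : Z = (Finset.Icc (0 : ℤ) (4 * m - 1)).image
      (fun t => (s + r * (a - 2 * m + 1 + t)) % N) := by
    rw [hZ]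
    ext x
    simp only [Finset.mem_union, Finset.mem_image, Finset.mem_Icc]
    constructor
    · rintro (⟨j, hj, rfl⟩ | ⟨j, hj, rfl⟩)
      · refine ⟨2 * m + j, by omega, ?_⟩
        exact (hkey j).symm
      · refine ⟨2 * m - 1 - j, by omega, ?_⟩
        congr 1
        ring
    · rintro ⟨t, ht, rfl⟩
      by_cases h : t < 2 * m
      · refine Or.inr ⟨2 * m - 1 - t, by omega, ?_⟩
        congr 1
        ring
      · refine Or.inl ⟨t - 2 * m, by omega, ?_⟩
        have := (hkey (t - 2 * m)).symm
        rw [show (2 * m + (t - 2 * m)) = t by ring] at this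
        exact this.symm
  refine ⟨hZeq, ?_, ?_⟩
  · show (s + r * a + r) % N = (s - r * a) % N
    have h1 : s + r * a + r = (s - r * a) + 1 * N := by rw [hN, hn']; ring
    rw [h1, Int.add_mul_emod_self_right]
  · have hinj : Set.InjOn (fun t => (s + r * (a - 2 * m + 1 + t)) % N)
        (Finset.Icc (0 : ℤ) (4 * m - 1)) := by
      intro t1 ht1 t2 ht2 heq
      simp only [Finset.coe_Icc, Set.mem_Icc] at ht1 ht2
      have hmod : (s + r * (a - 2 * m + 1 + t1)) ≡ (s + r * (a - 2 * m + 1 + t2)) [ZMOD N] := heq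
      have hd : N ∣ (s + r * (a - 2 * m + 1 + t2)) - (s + r * (a - 2 * m + 1 + t1)) :=
        Int.ModEq.dvd hmod
      have h1 : r * n ∣ r * (t2 - t1) := by
        rw [← hN]
        convert hd using 1
        ring
      have h2 : n ∣ t2 - t1 := (mul_dvd_mul_iff_left (by omega : r ≠ 0)).mp h1
      have h3 : t2 - t1 = 0 := Int.eq_zero_of_abs_lt_dvd h2 (abs_lt.mpr ⟨by omega, by omega⟩)
      omega
    rw [hZeq, Finset.card_image_of_injOn hinj, Int.card_Icc]
    omega
end

section
/- For all integers j, k with 0 ≤ j ≤ 2m−1 and 0 ≤ k ≤ 2m−1, one has qj + k not congruent to −(q+1)/2 modulo n. -/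
/-- For all integers `j, k` with `0 ≤ j ≤ 2m−1` and `0 ≤ k ≤ 2m−1`, one has
`qj + k ≢ −(q+1)/2 (mod n)`, where `n = (q²+1)/10`. -/
theorem qj_add_k_not_modEq
    (q m : ℤ) (hq : ∃ p k : ℕ, Nat.Prime p ∧ Odd p ∧ 0 < k ∧ q = (p : ℤ) ^ k)
    (hm : 1 ≤ m) (hform : q = 10 * m + 3 ∨ q = 10 * m + 7)
    (n c : ℤ) (hn : 10 * n = q ^ 2 + 1) (hc : 2 * c = q + 1)
    (j k : ℤ) (hj0 : 0 ≤ j) (hj1 : j ≤ 2 * m - 1) (hk0 : 0 ≤ k) (hk1 : k ≤ 2 * m - 1) :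
    ¬ (q * j + k ≡ -c [ZMOD n]) := by
  intro h
  obtain ⟨t, ht⟩ := h.dvd
  rcases hform with hf | hf
  · subst hf
    have hexp : (10 * m + 3) ^ 2 = 100 * (m * m) + 60 * m + 9 := by ring
    have hn' : n = 10 * (m * m) + 6 * m + 1 := by linarith
    have hc' : c = 5 * m + 2 := by linarith
    have hN : 0 < n := by nlinarith [mul_nonneg (by linarith : (0:ℤ) ≤ m) (by linarith : (0:ℤ) ≤ m)]
    have hL : n * (-t) = (10 * m + 3) * j + k + c := by linarith
    have hLpos : 0 < (10 * m + 3) * j + k + c := by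
      have : 0 ≤ (10 * m + 3) * j := mul_nonneg (by linarith) hj0
      linarith
    have hLlt : (10 * m + 3) * j + k + c < 2 * n := by
      have h1 : (10 * m + 3) * j ≤ (10 * m + 3) * (2 * m - 1) :=
        mul_le_mul_of_nonneg_left hj1 (by linarith)
      nlinarith
    have ht1 : -t = 1 := by
      have h1 : 1 ≤ -t := by
        by_contra hcon
        push_neg at hcon
        nlinarith
      have h2 : -t ≤ 1 := by
        by_contra hcon
        push_neg at hcon
        nlinarith
      omega
    have heq : (10 * m + 3) * j + k + c = n := by
      rw [← hL, ht1]; ring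
    rcases lt_trichotomy j m with hjm | hjm | hjm
    · have hjm' : j ≤ m - 1 := by omega
      have h1 : (10 * m + 3) * j ≤ (10 * m + 3) * (m - 1) :=
        mul_le_mul_of_nonneg_left hjm' (by linarith)
      nlinarith
    · subst hjm; nlinarith
    · have hjm' : m + 1 ≤ j := by omega
      have h1 : (10 * m + 3) * (m + 1) ≤ (10 * m + 3) * j :=
        mul_le_mul_of_nonneg_left hjm' (by linarith)
      nlinarith
  · subst hf
    have hexp : (10 * m + 7) ^ 2 = 100 * (m * m) + 140 * m + 49 := by ring
    have hn' : n = 10 * (m * m) + 14 * m + 5 := by linarith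
    have hc' : c = 5 * m + 4 := by linarith
    have hN : 0 < n := by nlinarith [mul_nonneg (by linarith : (0:ℤ) ≤ m) (by linarith : (0:ℤ) ≤ m)]
    have hL : n * (-t) = (10 * m + 7) * j + k + c := by linarith
    have hLpos : 0 < (10 * m + 7) * j + k + c := by
      have : 0 ≤ (10 * m + 7) * j := mul_nonneg (by linarith) hj0
      linarith
    have hLlt : (10 * m + 7) * j + k + c < 2 * n := by
      have h1 : (10 * m + 7) * j ≤ (10 * m + 7) * (2 * m - 1) :=
        mul_le_mul_of_nonneg_left hj1 (by linarith)
      nlinarith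
    have ht1 : -t = 1 := by
      have h1 : 1 ≤ -t := by
        by_contra hcon
        push_neg at hcon
        nlinarith
      have h2 : -t ≤ 1 := by
        by_contra hcon
        push_neg at hcon
        nlinarith
      omega
    have heq : (10 * m + 7) * j + k + c = n := by
      rw [← hL, ht1]; ring
    rcases lt_trichotomy j m with hjm | hjm | hjm
    · have hjm' : j ≤ m - 1 := by omega
      have h1 : (10 * m + 7) * j ≤ (10 * m + 7) * (m - 1) :=
        mul_le_mul_of_nonneg_left hjm' (by linarith)
      nlinarith
    · subst hjm; nlinarith
    · have hjm' : m + 1 ≤ j := by omega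
      have h1 : (10 * m + 7) * (m + 1) ≤ (10 * m + 7) * j :=
        mul_le_mul_of_nonneg_left hjm' (by linarith)
      nlinarith
end

section
/- Let a = (n−1)/2. For all integers j, k with 0 ≤ j, k ≤ 2m−1, one has −q·(s − r(a−j)) not congruent to s − r(a−k) modulo N and −q·(s − r(a−j)) not congruent to s + r(a−k) modulo N. Equivalently, the set Z = {s − r(a−j) mod N, s + r(a−j) mod N : 0 ≤ j ≤ 2m−1} satisfies Z ∩ (−q·Z mod N) = ∅. -/
private lemma pin' (n d e : ℤ) (hn : 0 < n) (h1 : n*(e-1) < n*d) (h2 : n*d < n*(e+1)) :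
    d = e := by
  have a1 := (mul_lt_mul_iff_right₀ hn).mp h1
  have a2 := (mul_lt_mul_iff_right₀ hn).mp h2
  omega

private lemma keyA (q m n a : ℤ) (hm : 1 ≤ m)
    (hform : q = 10*m+3 ∨ q = 10*m+7)
    (hn : 10*n = q^2+1) (ha : 2*a = n-1)
    (j k : ℤ) (hj0 : 0 ≤ j) (hj1 : j ≤ 2*m-1) (hk0 : 0 ≤ k) (hk1 : k ≤ 2*m-1) :
    ¬ (n ∣ q*(a-j) + (a-k)) ∧ ¬ (n ∣ q*(a-j) - (a-k)) := by
  rcases hform with h | h <;> subst h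
  · have hn' : n = 10*m^2+6*m+1 := by nlinarith [hn]
    subst hn'
    have ha' : a = 5*m^2+3*m := by linarith
    subst ha'
    have hnpos : (0:ℤ) < 10*m^2+6*m+1 := by nlinarith
    constructor
    · rintro ⟨c, hc⟩
      have hY : (10*m^2+6*m+1) * (c - 5*m) = 20*m^2+7*m - (10*m+3)*j - k := by
        linear_combination -hc
      have hd : c - 5*m = 1 := by
        apply pin' _ _ _ hnpos
        · rw [hY]
          nlinarith [mul_nonneg (show (0:ℤ) ≤ 2*m-1-j by linarith)
            (show (0:ℤ) ≤ 10*m+3 by linarith)]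
        · rw [hY]
          nlinarith [mul_nonneg hj0 (show (0:ℤ) ≤ 10*m+3 by linarith)]
      rw [hd] at hY
      rcases le_or_gt j (m-1) with hj | hj
      · nlinarith [mul_nonneg (show (0:ℤ) ≤ m-1-j by linarith)
          (show (0:ℤ) ≤ 10*m+3 by linarith)]
      · nlinarith [mul_nonneg (show (0:ℤ) ≤ j-m by linarith)
          (show (0:ℤ) ≤ 10*m+3 by linarith)]
    · rintro ⟨c, hc⟩
      have hY : (10*m^2+6*m+1) * (c - 5*m) = 10*m^2+m - (10*m+3)*j + k := by
        linear_combination -hc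
      have hd : c - 5*m = 0 := by
        apply pin' _ _ _ hnpos
        · rw [hY]
          nlinarith [mul_nonneg (show (0:ℤ) ≤ 2*m-1-j by linarith)
            (show (0:ℤ) ≤ 10*m+3 by linarith)]
        · rw [hY]
          nlinarith [mul_nonneg hj0 (show (0:ℤ) ≤ 10*m+3 by linarith)]
      rw [hd] at hY
      rcases le_or_gt j (m-1) with hj | hj
      · nlinarith [mul_nonneg (show (0:ℤ) ≤ m-1-j by linarith)
          (show (0:ℤ) ≤ 10*m+3 by linarith)]
      · rcases le_or_gt (m+1) j with hj2 | hj2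
        · nlinarith [mul_nonneg (show (0:ℤ) ≤ j-m-1 by linarith)
            (show (0:ℤ) ≤ 10*m+3 by linarith)]
        · have hjm : j = m := by omega
          subst hjm
          nlinarith [hY]
  · have hn' : n = 10*m^2+14*m+5 := by nlinarith [hn]
    subst hn'
    have ha' : a = 5*m^2+7*m+2 := by linarith
    subst ha'
    have hnpos : (0:ℤ) < 10*m^2+14*m+5 := by nlinarith
    constructor
    · rintro ⟨c, hc⟩
      have hY : (10*m^2+14*m+5) * (c - (5*m+3)) = 10*m^2+9*m+1 - (10*m+7)*j - k := by
        linear_combination -hc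
      have hd : c - (5*m+3) = 0 := by
        apply pin' _ _ _ hnpos
        · rw [hY]
          nlinarith [mul_nonneg (show (0:ℤ) ≤ 2*m-1-j by linarith)
            (show (0:ℤ) ≤ 10*m+7 by linarith)]
        · rw [hY]
          nlinarith [mul_nonneg hj0 (show (0:ℤ) ≤ 10*m+7 by linarith)]
      rw [hd] at hY
      rcases le_or_gt j (m-1) with hj | hj
      · nlinarith [mul_nonneg (show (0:ℤ) ≤ m-1-j by linarith)
          (show (0:ℤ) ≤ 10*m+7 by linarith)]
      · rcases le_or_gt (m+1) j with hj2 | hj2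
        · nlinarith [mul_nonneg (show (0:ℤ) ≤ j-m-1 by linarith)
            (show (0:ℤ) ≤ 10*m+7 by linarith)]
        · have hjm : j = m := by omega
          subst hjm
          nlinarith [hY]
    · rintro ⟨c, hc⟩
      have hY : (10*m^2+14*m+5) * (c - (5*m+2)) = 10*m^2+9*m+2 - (10*m+7)*j + k := by
        linear_combination -hc
      have hd : c - (5*m+2) = 0 := by
        apply pin' _ _ _ hnpos
        · rw [hY]
          nlinarith [mul_nonneg (show (0:ℤ) ≤ 2*m-1-j by linarith)
            (show (0:ℤ) ≤ 10*m+7 by linarith)]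
        · rw [hY]
          nlinarith [mul_nonneg hj0 (show (0:ℤ) ≤ 10*m+7 by linarith)]
      rw [hd] at hY
      rcases le_or_gt j m with hj | hj
      · nlinarith [mul_nonneg (show (0:ℤ) ≤ m-j by linarith)
          (show (0:ℤ) ≤ 10*m+7 by linarith)]
      · nlinarith [mul_nonneg (show (0:ℤ) ≤ j-m-1 by linarith)
          (show (0:ℤ) ≤ 10*m+7 by linarith)]

private lemma keyB (q m n r N s a : ℤ) (hm : 1 ≤ m)
    (hform : q = 10*m+3 ∨ q = 10*m+7)
    (hn : 10*n = q^2+1) (hr : r = q+1) (hN : N = r*n)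
    (hs : 2*s = q^2+1) (ha : 2*a = n-1)
    (j k : ℤ) (hj0 : 0 ≤ j) (hj1 : j ≤ 2*m-1) (hk0 : 0 ≤ k) (hk1 : k ≤ 2*m-1)
    (ε δ : ℤ) (hε : ε = 1 ∨ ε = -1) (hδ : δ = 1 ∨ δ = -1) :
    ¬ (N ∣ (s + δ*(r*(a-k))) + q*(s + ε*(r*(a-j)))) := by
  have hq13 : 13 ≤ q := by rcases hform with h|h <;> omega
  have hs5 : s = 5*n := by linarith
  subst hs5 hr hN
  rintro ⟨c, hc⟩
  have h2 : (q+1) * (δ*(a-k) + ε*(q*(a-j))) = (q+1) * (n*(c-5)) := by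
    linear_combination hc
  have h3 : δ*(a-k) + ε*(q*(a-j)) = n*(c-5) :=
    mul_left_cancel₀ (by linarith : (q+1:ℤ) ≠ 0) h2
  obtain ⟨hA1, hA2⟩ := keyA q m n a hm hform hn ha j k hj0 hj1 hk0 hk1
  rcases hε with rfl | rfl <;> rcases hδ with rfl | rfl
  · exact hA1 ⟨c-5, by linear_combination h3⟩
  · exact hA2 ⟨c-5, by linear_combination h3⟩
  · exact hA2 ⟨-(c-5), by linear_combination -h3⟩
  · exact hA1 ⟨-(c-5), by linear_combination -h3⟩

private lemma keyC (q m n r N s a : ℤ) (hm : 1 ≤ m)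
    (hform : q = 10*m+3 ∨ q = 10*m+7)
    (hn : 10*n = q^2+1) (hr : r = q+1) (hN : N = r*n)
    (hs : 2*s = q^2+1) (ha : 2*a = n-1)
    (j k : ℤ) (hj0 : 0 ≤ j) (hj1 : j ≤ 2*m-1) (hk0 : 0 ≤ k) (hk1 : k ≤ 2*m-1)
    (ε δ : ℤ) (hε : ε = 1 ∨ ε = -1) (hδ : δ = 1 ∨ δ = -1) (x : ℤ)
    (h1 : x = (s + δ*(r*(a-k))) % N)
    (h2 : x = (-q * ((s + ε*(r*(a-j))) % N)) % N) : False := by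
  set v := s + δ*(r*(a-k)) with hv
  set w := s + ε*(r*(a-j)) with hw
  have hme1 : x ≡ v [ZMOD N] := by
    rw [h1]; exact Int.emod_emod_of_dvd _ dvd_rfl
  have hme2 : x ≡ -q * w [ZMOD N] := by
    rw [h2]
    have e1 : (-q) * (w % N) ≡ (-q) * w [ZMOD N] :=
      Int.ModEq.mul_left _ (Int.emod_emod_of_dvd _ dvd_rfl)
    exact (Int.emod_emod_of_dvd _ dvd_rfl).trans e1
  have hcong := hme1.symm.trans hme2
  have hdvd : N ∣ v + q*w := by
    have hd := (dvd_neg (α := ℤ)).mpr hcong.dvd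
    rw [show v + q*w = -(-q*w - v) by ring]; exact hd
  exact keyB q m n r N s a hm hform hn hr hN hs ha j k hj0 hj1 hk0 hk1 ε δ hε hδ hdvd

/-- Let `a = (n−1)/2`. For all `0 ≤ j, k ≤ 2m−1`, one has
`−q(s − r(a−j)) ≢ s − r(a−k) (mod N)` and `−q(s − r(a−j)) ≢ s + r(a−k) (mod N)`.
Equivalently, the set `Z = {s − r(a−j) mod N, s + r(a−j) mod N : 0 ≤ j ≤ 2m−1}`
satisfies `Z ∩ (−q·Z mod N) = ∅`. -/
theorem defining_set_dual_disjoint_len_div_ten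
    (q m : ℤ) (hq : ∃ p k : ℕ, Nat.Prime p ∧ Odd p ∧ 0 < k ∧ q = (p : ℤ) ^ k)
    (hm : 1 ≤ m) (hform : q = 10 * m + 3 ∨ q = 10 * m + 7)
    (n r N s a : ℤ) (hn : 10 * n = q ^ 2 + 1) (hr : r = q + 1) (hN : N = r * n)
    (hs : 2 * s = q ^ 2 + 1) (ha : 2 * a = n - 1) :
    (∀ j k : ℤ, 0 ≤ j → j ≤ 2 * m - 1 → 0 ≤ k → k ≤ 2 * m - 1 →
        ¬ (-q * (s - r * (a - j)) ≡ s - r * (a - k) [ZMOD N]) ∧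
        ¬ (-q * (s - r * (a - j)) ≡ s + r * (a - k) [ZMOD N])) ∧
    ({x : ℤ | ∃ j : ℤ, 0 ≤ j ∧ j ≤ 2 * m - 1 ∧
          (x = (s - r * (a - j)) % N ∨ x = (s + r * (a - j)) % N)} ∩
      {y : ℤ | ∃ z ∈ {x : ℤ | ∃ j : ℤ, 0 ≤ j ∧ j ≤ 2 * m - 1 ∧
          (x = (s - r * (a - j)) % N ∨ x = (s + r * (a - j)) % N)},
        y = (-q * z) % N}) = ∅ := by
  constructor
  · intro j k hj0 hj1 hk0 hk1
    constructor
    · intro h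
      refine keyB q m n r N s a hm hform hn hr hN hs ha j k hj0 hj1 hk0 hk1
        (-1) (-1) (Or.inr rfl) (Or.inr rfl) ?_
      have hd := h.dvd
      convert hd using 1; ring
    · intro h
      refine keyB q m n r N s a hm hform hn hr hN hs ha j k hj0 hj1 hk0 hk1
        (-1) 1 (Or.inr rfl) (Or.inl rfl) ?_
      have hd := h.dvd
      convert hd using 1; ring
  · rw [Set.eq_empty_iff_forall_notMem]
    rintro x ⟨⟨j, hj0, hj1, hxj⟩, z, ⟨j', hj'0, hj'1, hzj⟩, hxz⟩
    rcases hxj with h1 | h1 <;> rcases hzj with h2 | h2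
    · exact keyC q m n r N s a hm hform hn hr hN hs ha j' j hj'0 hj'1 hj0 hj1
        (-1) (-1) (Or.inr rfl) (Or.inr rfl) x
        (by rw [h1, show s - r*(a-j) = s + (-1)*(r*(a-j)) from by ring])
        (by rw [hxz, h2, show s - r*(a-j') = s + (-1)*(r*(a-j')) from by ring])
    · exact keyC q m n r N s a hm hform hn hr hN hs ha j' j hj'0 hj'1 hj0 hj1
        1 (-1) (Or.inl rfl) (Or.inr rfl) x
        (by rw [h1, show s - r*(a-j) = s + (-1)*(r*(a-j)) from by ring])
        (by rw [hxz, h2, show s + r*(a-j') = s + 1*(r*(a-j')) from by ring])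
    · exact keyC q m n r N s a hm hform hn hr hN hs ha j' j hj'0 hj'1 hj0 hj1
        (-1) 1 (Or.inr rfl) (Or.inl rfl) x
        (by rw [h1, show s + r*(a-j) = s + 1*(r*(a-j)) from by ring])
        (by rw [hxz, h2, show s - r*(a-j') = s + (-1)*(r*(a-j')) from by ring])
    · exact keyC q m n r N s a hm hform hn hr hN hs ha j' j hj'0 hj'1 hj0 hj1
        1 1 (Or.inl rfl) (Or.inl rfl) x
        (by rw [h1, show s + r*(a-j) = s + 1*(r*(a-j)) from by ring])
        (by rw [hxz, h2, show s + r*(a-j') = s + 1*(r*(a-j')) from by ring])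
end

section
/- The code C is an MDS code with parameters [n, n − 4m, 4m + 1]: its dimension over K equals n − 4m, and the least Hamming weight of a nonzero codeword of C equals exactly 4m + 1 (meeting the Singleton bound). -/
set_option synthInstance.maxHeartbeats 400000

set_option maxHeartbeats 1000000

private lemma vand_ker' {F : Type*} [Field F] {w : ℕ} (x e : Fin w → F)
    (hx : Function.Injective x)
    (h : ∀ i : Fin w, ∑ j, e j * x j ^ (i : ℕ) = 0) : e = 0 := by
  classical
  apply Matrix.eq_zero_of_mulVec_eq_zero
    (M := (Matrix.vandermonde x).transpose)
    (by rwa [Matrix.det_transpose, Matrix.det_vandermonde_ne_zero_iff])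
  funext i
  simpa [Matrix.mulVec, Matrix.vandermonde, dotProduct, Matrix.transpose_apply,
    mul_comm] using h i

private lemma bch_core' {F : Type*} [Field F] [DecidableEq F] {n L : ℕ} (γ : F)
    (hγ : IsPrimitiveRoot γ n) (t0 : ℤ) (d : Fin n → F)
    (hd : ∀ i : ℕ, i < L → ∑ k : Fin n, d k * (γ ^ (k : ℕ)) ^ (t0 + (i : ℤ)) = 0)
    (hsupp : (Finset.univ.filter (fun k => d k ≠ 0)).card ≤ L) : d = 0 := by
  classical
  rcases Nat.eq_zero_or_pos n with hn0 | hn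
  · subst hn0; funext k; exact k.elim0
  have hγ0 : γ ≠ 0 := hγ.ne_zero hn.ne'
  set S : Finset (Fin n) := Finset.univ.filter (fun k => d k ≠ 0) with hS
  set w := S.card with hw
  set τ : Fin w ≃ {k // k ∈ S} := S.equivFin.symm with hτ
  set x : Fin w → F := fun j => γ ^ ((τ j : Fin n) : ℕ) with hxdef
  set e : Fin w → F := fun j => d (τ j) * (γ ^ ((τ j : Fin n) : ℕ)) ^ t0 with hedef
  have hγk0 : ∀ k : Fin n, γ ^ (k : ℕ) ≠ 0 := fun k => pow_ne_zero _ hγ0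
  have hxinj : Function.Injective x := by
    intro i j hij
    apply τ.injective
    apply Subtype.ext
    apply Fin.ext
    exact hγ.pow_inj (τ i).1.isLt (τ j).1.isLt hij
  have hsum : ∀ i : Fin w, ∑ j, e j * x j ^ (i : ℕ) = 0 := by
    intro i
    have key : ∑ j, e j * x j ^ (i : ℕ)
        = ∑ k ∈ S, d k * (γ ^ (k : ℕ)) ^ (t0 + ((i : ℕ) : ℤ)) := by
      rw [← Finset.sum_coe_sort S (fun k => d k * (γ ^ (k : ℕ)) ^ (t0 + ((i : ℕ) : ℤ)))]
      rw [← Equiv.sum_comp τ (fun y : {k // k ∈ S} =>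
        d y * (γ ^ ((y : Fin n) : ℕ)) ^ (t0 + ((i : ℕ) : ℤ)))]
      refine Finset.sum_congr rfl fun j _ => ?_
      simp only [hedef, hxdef]
      rw [zpow_add₀ (hγk0 _), zpow_natCast]
      ring
    rw [key]
    have ext : ∑ k ∈ S, d k * (γ ^ (k : ℕ)) ^ (t0 + ((i : ℕ) : ℤ))
        = ∑ k : Fin n, d k * (γ ^ (k : ℕ)) ^ (t0 + ((i : ℕ) : ℤ)) := by
      apply Finset.sum_subset (Finset.subset_univ S)
      intro k _ hk
      have : d k = 0 := by
        by_contra h'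
        exact hk (by simp [hS, h'])
      rw [this, zero_mul]
    rw [ext]
    exact hd i (lt_of_lt_of_le i.isLt hsupp)
  have he0 : e = 0 := vand_ker' x e hxinj hsum
  funext k
  show d k = 0
  by_contra hk
  have hkS : k ∈ S := by simp [hS, hk]
  have h0 := congrFun he0 (τ.symm ⟨k, hkS⟩)
  simp only [hedef, Equiv.apply_symm_apply, Pi.zero_apply] at h0
  rcases mul_eq_zero.mp h0 with h1 | h2
  · exact hk h1
  · exact (zpow_ne_zero t0 (hγk0 k)) h2

private lemma exists_low_weight' {Kk : Type*} [Field Kk] [DecidableEq Kk] {n r : ℕ} (hr : r ≤ n)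
    (V : Submodule Kk (Fin n → Kk)) (hdim : n - r < Module.finrank Kk V) :
    ∃ c ∈ V, c ≠ 0 ∧ (Finset.univ.filter (fun k => c k ≠ 0)).card ≤ r := by
  classical
  obtain ⟨T, -, hT⟩ := Finset.exists_subset_card_eq
    (s := (Finset.univ : Finset (Fin n))) (n := n - r) (by simp)
  let π : V →ₗ[Kk] ({k // k ∈ T} → Kk) :=
    { toFun := fun v t => v.1 t.1
      map_add' := fun _ _ => rfl
      map_smul' := fun _ _ => rfl }
  have hni : ¬ Function.Injective π := by
    intro hinj
    have h1 := LinearMap.finrank_le_finrank_of_injective hinj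
    rw [Module.finrank_pi, Fintype.card_coe, hT] at h1
    omega
  rw [← LinearMap.ker_eq_bot] at hni
  obtain ⟨v, hvker, hv0⟩ := Submodule.exists_mem_ne_zero_of_ne_bot hni
  refine ⟨v.1, v.2, ?_, ?_⟩
  · intro h
    exact hv0 (Subtype.ext h)
  · have hvanish : ∀ k ∈ T, (v : Fin n → Kk) k = 0 := by
      intro k hk
      exact congrFun (LinearMap.mem_ker.mp hvker) ⟨k, hk⟩
    have hsub : (Finset.univ.filter (fun k => (v : Fin n → Kk) k ≠ 0)) ⊆ Tᶜ := by
      intro k hk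
      simp only [Finset.mem_filter] at hk
      simp only [Finset.mem_compl]
      intro hkT
      exact hk.2 (hvanish k hkT)
    calc (Finset.univ.filter (fun k => (v : Fin n → Kk) k ≠ 0)).card ≤ Tᶜ.card :=
          Finset.card_le_card hsub
      _ = n - (n - r) := by rw [Finset.card_compl, hT]; simp
      _ ≤ r := by omega

/-- The constacyclic code `C` (of length `n = (q²+1)/10`, with defining set
`Z = {s − r(a−j) : 0 ≤ j ≤ 2m−1} ∪ {s + r(a−j) : 0 ≤ j ≤ 2m−1}`) is an MDS code with
parameters `[n, n − 4m, 4m + 1]`: its dimension over `K` equals `n − 4m`, and the least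
Hamming weight of a nonzero codeword of `C` equals exactly `4m + 1`. -/
theorem constacyclic_code_len_div_ten_is_MDS
    (q m : ℕ) (hq : ∃ p k : ℕ, Nat.Prime p ∧ Odd p ∧ 0 < k ∧ q = p ^ k)
    (hm : 1 ≤ m) (hform : q = 10 * m + 3 ∨ q = 10 * m + 7)
    (n N s a : ℕ) (hn : 10 * n = q ^ 2 + 1) (hN : N = (q + 1) * n)
    (hs : 2 * s = q ^ 2 + 1) (ha : 2 * a + 1 = n)
    (F : Type*) [Field F] [Fintype F] [DecidableEq F] (hF : Fintype.card F = q ^ 4)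
    (β : F) (hβ : IsPrimitiveRoot β N)
    (K : Subfield F) (hK : ∀ x : F, x ∈ K ↔ x ^ (q ^ 2) = x)
    (C : Submodule K (Fin n → K))
    (hC : ∀ c : Fin n → K, c ∈ C ↔ ∀ j : ℤ, 0 ≤ j → j ≤ 2 * (m : ℤ) - 1 →
      (∑ k : Fin n, (c k : F) *
          β ^ ((((s : ℤ) - ((q : ℤ) + 1) * ((a : ℤ) - j))) * ((k : ℕ) : ℤ)) = 0 ∧
       ∑ k : Fin n, (c k : F) *
          β ^ ((((s : ℤ) + ((q : ℤ) + 1) * ((a : ℤ) - j))) * ((k : ℕ) : ℤ)) = 0)) :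
    Module.finrank K C = n - 4 * m ∧
    (∀ c ∈ C, c ≠ 0 → 4 * m + 1 ≤ hammingNorm c) ∧
    (∃ c ∈ C, c ≠ 0 ∧ hammingNorm c = 4 * m + 1) := by
  -- numeric facts
  have hq13 : 13 ≤ q := by rcases hform with h | h <;> omega
  have hnm : 4 * m + 1 ≤ n := by
    rcases hform with h | h <;> nlinarith [hn, h]
  have hnpos : 0 < n := by omega
  have hNpos : 0 < N := by
    have : 0 < (q + 1) * n := by positivity
    omega
  have hβ0 : β ≠ 0 := hβ.ne_zero hNpos.ne'
  have hs5 : (s : ℤ) = 5 * (n : ℤ) := by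
    have : s = 5 * n := by omega
    exact_mod_cast this
  have hq2 : (q : ℤ)^2 = 10 * (n : ℤ) - 1 := by
    have : (10 : ℤ) * n = (q:ℤ)^2 + 1 := by exact_mod_cast hn
    linarith
  have hNz : (N : ℤ) = ((q:ℤ) + 1) * n := by exact_mod_cast hN
  have haz : 2 * (a : ℤ) + 1 = n := by exact_mod_cast ha
  -- β exponent mod N
  have hβmod : ∀ e1 e2 : ℤ, ((N : ℤ) ∣ e1 - e2) → β ^ e1 = β ^ e2 := by
    intro e1 e2 ⟨w, hw⟩
    have he1 : e1 = e2 + (N : ℤ) * w := by linarith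
    rw [he1, zpow_add₀ hβ0, zpow_mul, zpow_natCast, hβ.pow_eq_one, one_zpow, mul_one]
  -- γ primitive n-th root
  have hγ : IsPrimitiveRoot (β ^ (q + 1)) n := hβ.pow hNpos hN
  set γ : F := β ^ (q + 1) with hγdef
  -- the window of checks
  have hwin : ∀ c : Fin n → K, c ∈ C → ∀ t : ℤ,
      (a : ℤ) - 2 * m + 1 ≤ t → t ≤ (a : ℤ) + 2 * m →
      ∑ k : Fin n, (c k : F) * β ^ (((s : ℤ) + ((q:ℤ) + 1) * t) * ((k : ℕ) : ℤ)) = 0 := by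
    intro c hc t ht1 ht2
    rcases le_or_gt t (a : ℤ) with hta | hta
    · have h := ((hC c).mp hc (a - t) (by omega) (by omega)).2
      have he : (a:ℤ) - ((a:ℤ) - t) = t := by ring
      rw [he] at h
      exact h
    · have h := ((hC c).mp hc (t - a - 1) (by omega) (by omega)).1
      rw [← h]
      apply Finset.sum_congr rfl
      intro k _
      congr 1
      apply hβmod
      refine ⟨(k : ℕ), ?_⟩
      rw [hNz]
      linear_combination (((q:ℤ)+1) * ((k : ℕ):ℤ)) * haz
  -- minimum weight: any codeword of weight ≤ 4m is zero
  have hmin : ∀ c : Fin n → K, c ∈ C →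
      (Finset.univ.filter (fun k => c k ≠ 0)).card ≤ 4 * m → c = 0 := by
    intro c hc hcard
    set d : Fin n → F := fun k => (c k : F) * β ^ ((s:ℤ) * ((k:ℕ):ℤ)) with hddef
    have hterm : ∀ (k : Fin n) (t : ℤ),
        d k * (γ ^ (k : ℕ)) ^ t = (c k : F) * β ^ (((s:ℤ) + ((q:ℤ)+1) * t) * ((k:ℕ):ℤ)) := by
      intro k t
      simp only [hddef, hγdef]
      rw [← pow_mul, ← zpow_natCast β ((q+1)*(k:ℕ)), ← zpow_mul, mul_assoc,
        ← zpow_add₀ hβ0]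
      congr 2
      push_cast
      ring
    have hd0 : d = 0 := by
      apply bch_core' (L := 4 * m) γ hγ ((a:ℤ) - 2 * m + 1) d
      · intro i hi
        have := hwin c hc ((a:ℤ) - 2*m + 1 + i) (by omega) (by omega)
        rw [← this]
        exact Finset.sum_congr rfl fun k _ => hterm k _
      · have : (Finset.univ.filter (fun k => d k ≠ 0))
            = (Finset.univ.filter (fun k => c k ≠ 0)) := by
          apply Finset.filter_congr
          intro k _
          have hb : β ^ ((s:ℤ) * ((k:ℕ):ℤ)) ≠ 0 := zpow_ne_zero _ hβ0
          simp only [hddef, ne_eq, mul_eq_zero, hb, or_false, ZeroMemClass.coe_eq_zero]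
        rw [this]
        exact hcard
    funext k
    have := congrFun hd0 k
    simp only [hddef, Pi.zero_apply, mul_eq_zero] at this
    rcases this with h1 | h2
    · exact Subtype.ext h1
    · exact absurd h2 (zpow_ne_zero _ hβ0)
  -- characteristic
  obtain ⟨p, k₀, hp, hpodd, hk₀, hqpk⟩ := hq
  haveI : CharP F (ringChar F) := ringChar.charP F
  obtain ⟨e, hrp, hcard⟩ := FiniteField.card F (ringChar F)
  have hpr : p = ringChar F := by
    have h1 : ringChar F ^ (e : ℕ) = p ^ (k₀ * 4) := by
      rw [← hcard, hF, hqpk, ← pow_mul]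
    have h2 : p ∣ ringChar F ^ (e : ℕ) := by
      rw [h1]
      exact dvd_pow_self p (by omega)
    exact (Nat.prime_dvd_prime_iff_eq hp hrp).mp (hp.dvd_of_dvd_pow h2)
  haveI hcharp : CharP F p := hpr ▸ ringChar.charP F
  haveI : Fact (Nat.Prime p) := ⟨hp⟩
  have hq2pow : q ^ 2 = p ^ (2 * k₀) := by rw [hqpk, ← pow_mul, mul_comm]
  -- Frobenius on check sums
  have hfrob : ∀ (c : Fin n → K) (z : ℤ),
      (∑ k : Fin n, (c k : F) * β ^ (z * ((k:ℕ):ℤ))) ^ (q ^ 2)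
      = ∑ k : Fin n, (c k : F) * β ^ ((z * ((q:ℤ))^2) * ((k:ℕ):ℤ)) := by
    intro c z
    rw [hq2pow, sum_pow_char_pow]
    refine Finset.sum_congr rfl fun k _ => ?_
    rw [mul_pow, ← hq2pow]
    congr 1
    · exact (hK _).mp (SetLike.coe_mem _)
    · rw [← zpow_natCast (β ^ (z * ((k:ℕ):ℤ))) (q ^ 2), ← zpow_mul]
      congr 1
      push_cast
      ring
  -- the check linear map
  set Φ : (Fin n → K) →ₗ[K] (Fin (2*m) → F) :=
    { toFun := fun c j => ∑ k : Fin n, (c k : F) *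
        β ^ ((((s:ℤ) - ((q:ℤ)+1) * ((a:ℤ) - ((j:ℕ):ℤ)))) * ((k:ℕ):ℤ))
      map_add' := by
        intro c c'
        funext j
        simp only [Pi.add_apply]
        rw [← Finset.sum_add_distrib]
        refine Finset.sum_congr rfl fun k _ => ?_
        push_cast
        ring
      map_smul' := by
        intro κ c
        funext j
        simp only [Pi.smul_apply, RingHom.id_apply]
        rw [Submonoid.smul_def, smul_eq_mul, Finset.mul_sum]
        refine Finset.sum_congr rfl fun k _ => ?_
        simp only [smul_eq_mul]
        push_cast
        ring } with hΦdef
  have hCeq : ∀ c : Fin n → K, c ∈ C ↔ Φ c = 0 := by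
    intro c
    constructor
    · intro hc
      funext j
      have hj := ((hC c).mp hc ((j:ℕ):ℤ) (by positivity) (by
        have := j.isLt
        omega)).1
      exact hj
    · intro hker
      rw [hC]
      intro j hj0 hj1
      have hj2m : j.toNat < 2 * m := by omega
      have hjj : (((⟨j.toNat, hj2m⟩ : Fin (2*m)) : ℕ) : ℤ) = j := by
        simp
        omega
      have hminus : ∑ k : Fin n, (c k : F) *
          β ^ ((((s:ℤ) - ((q:ℤ)+1) * ((a:ℤ) - j))) * ((k:ℕ):ℤ)) = 0 := by
        have h3 := congrFun hker (⟨j.toNat, hj2m⟩ : Fin (2*m))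
        simp only [hΦdef, LinearMap.coe_mk, AddHom.coe_mk, Pi.zero_apply] at h3
        rwa [hjj] at h3
      refine ⟨hminus, ?_⟩
      have h2 : (∑ k : Fin n, (c k : F) *
          β ^ ((((s:ℤ) - ((q:ℤ)+1) * ((a:ℤ) - j))) * ((k:ℕ):ℤ))) ^ (q^2) = 0 := by
        rw [hminus]
        exact zero_pow (by positivity)
      rw [hfrob] at h2
      rw [← h2]
      refine Finset.sum_congr rfl fun k _ => ?_
      congr 1
      apply hβmod
      refine ⟨(10*((a:ℤ)-j) - 5*((q:ℤ)-1)) * ((k:ℕ):ℤ), ?_⟩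
      rw [hNz]
      linear_combination ((((q:ℤ)+1)) * ((a:ℤ)-j) * ((k:ℕ):ℤ)) * hq2 +
        (((k:ℕ):ℤ) * (1 - (q:ℤ)^2)) * hs5
  -- cardinality of K
  haveI hdecK : DecidablePred (fun x : F => x ∈ K) := fun x => decidable_of_iff _ (hK x).symm
  have hq2ge : 2 ≤ q^2 := by nlinarith
  obtain ⟨g, hg⟩ := IsCyclic.exists_generator (α := Fˣ)
  have horder : orderOf g = q^4 - 1 := by
    rw [orderOf_eq_card_of_forall_mem_zpowers hg, Nat.card_eq_fintype_card,
      Fintype.card_units, hF]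
  have hdvd : (q^2 - 1) * (q^2 + 1) = q^4 - 1 := by
    have h1 : (1:ℕ) ≤ q^2 := by omega
    have h2 : (1:ℕ) ≤ q^4 := Nat.one_le_pow _ _ (by omega)
    zify [h1, h2]
    ring
  set h : Fˣ := g ^ (q^2 + 1) with hh
  have hordh : orderOf h = q^2 - 1 := by
    rw [hh, orderOf_pow, horder, Nat.gcd_eq_right ⟨q^2 - 1, by rw [← hdvd]; ring⟩,
      ← hdvd, Nat.mul_div_cancel _ (by omega)]
  have hordhF : orderOf ((h : Fˣ) : F) = q^2 - 1 := by rw [orderOf_units, hordh]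
  have hpow1 : ((h : Fˣ) : F) ^ (q^2 - 1) = 1 := by
    rw [← hordhF]
    exact pow_orderOf_eq_one _
  have hK2 : ∀ i : ℕ, (((h : Fˣ) : F)) ^ i ∈ K := by
    intro i
    rw [hK]
    have : (((h : Fˣ) : F) ^ i) ^ (q ^ 2) = (((h : Fˣ) : F) ^ i) ^ (q^2 - 1) * ((h : Fˣ) : F) ^ i := by
      rw [← pow_succ]
      congr 1
      omega
    rw [this, ← pow_mul, mul_comm i (q^2-1), pow_mul, hpow1, one_pow, one_mul]
  have hcardK : q^2 ≤ Fintype.card K := by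
    classical
    set T : Finset F := insert 0 ((Finset.range (q^2 - 1)).image (fun i => ((h : Fˣ) : F) ^ i))
      with hT
    have hTcard : T.card = q^2 := by
      rw [hT, Finset.card_insert_of_notMem, Finset.card_image_of_injOn, Finset.card_range]
      · omega
      · intro i hi j hj hij
        rw [Finset.coe_range, Set.mem_Iio] at hi hj
        exact pow_injOn_Iio_orderOf (by rwa [hordhF, Set.mem_Iio])
          (by rwa [hordhF, Set.mem_Iio]) hij
      · intro hmem
        obtain ⟨i, -, hi⟩ := Finset.mem_image.mp hmem
        exact pow_ne_zero i (Units.ne_zero _) hi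
    have hsubK : T ⊆ Finset.univ.filter (fun x : F => x ∈ K) := by
      intro x hx
      rw [hT, Finset.mem_insert] at hx
      rw [Finset.mem_filter]
      refine ⟨Finset.mem_univ _, ?_⟩
      rcases hx with rfl | hx
      · exact zero_mem K
      · obtain ⟨i, _, rfl⟩ := Finset.mem_image.mp hx
        exact hK2 i
    calc q^2 = T.card := hTcard.symm
      _ ≤ (Finset.univ.filter (fun x : F => x ∈ K)).card := Finset.card_le_card hsubK
      _ = Fintype.card K := (Fintype.card_subtype _).symm
  -- finrank of F over K
  have hfinrankF : Module.finrank K F ≤ 2 := by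
    by_contra hlt
    push_neg at hlt
    have hcardF := Module.card_eq_pow_finrank (K := K) (V := F)
    rw [hF] at hcardF
    have h6 : q^6 ≤ q^4 := by
      calc q^6 = (q^2)^3 := by ring
        _ ≤ (q^2) ^ Module.finrank K F := Nat.pow_le_pow_right (by omega) hlt
        _ ≤ (Fintype.card K) ^ Module.finrank K F := Nat.pow_le_pow_left hcardK _
        _ = q^4 := hcardF.symm
    have : q^4 < q^6 := Nat.pow_lt_pow_right (by omega) (by omega)
    omega
  -- rank-nullity lower bound
  have hkerC : LinearMap.ker Φ = C := by
    ext c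
    rw [LinearMap.mem_ker, hCeq]
  have hrn := LinearMap.finrank_range_add_finrank_ker Φ
  have hdomain : Module.finrank K (Fin n → K) = n := by
    rw [Module.finrank_pi, Fintype.card_fin]
  have hrange : Module.finrank K (LinearMap.range Φ) ≤ 4 * m := by
    calc Module.finrank K (LinearMap.range Φ) ≤ Module.finrank K (Fin (2*m) → F) :=
          Submodule.finrank_le _
      _ = ∑ _j : Fin (2*m), Module.finrank K F := Module.finrank_pi_fintype K
      _ = 2 * m * Module.finrank K F := by
          rw [Finset.sum_const, Finset.card_univ, Fintype.card_fin, smul_eq_mul]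
      _ ≤ 2 * m * 2 := by
          exact Nat.mul_le_mul_left _ hfinrankF
      _ = 4 * m := by ring
  have hlb : n - 4 * m ≤ Module.finrank K C := by
    rw [hdomain, hkerC] at hrn
    omega
  -- upper bound via minimum weight
  have hub : Module.finrank K C ≤ n - 4 * m := by
    by_contra h'
    push_neg at h'
    obtain ⟨c, hcC, hc0, hcw⟩ := exists_low_weight' (r := 4*m) (by omega) C (by omega)
    exact hc0 (hmin c hcC hcw)
  have hdim : Module.finrank K C = n - 4 * m := le_antisymm hub hlb
  -- hammingNorm identification
  have hnorm : ∀ c : Fin n → K, hammingNorm c = (Finset.univ.filter (fun k => c k ≠ 0)).card := by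
    intro c
    rfl
  refine ⟨hdim, ?_, ?_⟩
  · intro c hc hc0
    by_contra hlt
    push_neg at hlt
    apply hc0
    apply hmin c hc
    rw [← hnorm]
    omega
  · have hlt : n - (4*m+1) < Module.finrank K C := by omega
    obtain ⟨c, hcC, hc0, hcw⟩ := exists_low_weight' (r := 4*m+1) (by omega) C hlt
    refine ⟨c, hcC, hc0, ?_⟩
    have hge : 4*m+1 ≤ hammingNorm c := by
      by_contra hlt2
      push_neg at hlt2
      apply hc0
      apply hmin c hcC
      rw [← hnorm]
      omega
    rw [← hnorm] at hcw
    omega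
end

section
/- The code C contains its Hermitian dual: C^⊥h ⊆ C. -/
set_option synthInstance.maxHeartbeats 400000

set_option maxHeartbeats 1000000 in
theorem nt_aux (q m n a : ℕ) (hm : 1 ≤ m)
    (hform : q = 10*m+3 ∨ q = 10*m+7) (hn : 10*n = q^2+1) (ha : 2*a+1 = n) :
    ∀ i j σ : ℤ, 0 ≤ i → i ≤ 2*(m:ℤ)-1 → 0 ≤ j → j ≤ 2*(m:ℤ)-1 →
      σ = 1 ∨ σ = -1 → ¬ ((n:ℤ) ∣ ((a:ℤ) - i) + σ * (q:ℤ) * ((a:ℤ) - j)) := by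
  intro i j σ hi0 hi1 hj0 hj1 hσ hdvd
  obtain ⟨k, hk⟩ := hdvd
  set M : ℤ := (m:ℤ) with hM
  have hM1 : 1 ≤ M := by rw [hM]; exact_mod_cast hm
  have hn' : (10:ℤ) * (n:ℤ) = (q:ℤ)^2 + 1 := by exact_mod_cast hn
  have ha' : 2*(a:ℤ) + 1 = (n:ℤ) := by exact_mod_cast ha
  rcases hform with hq | hq
  · have hq' : (q:ℤ) = 10*M+3 := by rw [hM]; exact_mod_cast hq
    rw [hq'] at hn'
    ring_nf at hn'
    have hnM : (n:ℤ) = 10*M^2+6*M+1 := by linarith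
    have haM : (a:ℤ) = 5*M^2+3*M := by linarith
    rw [hq', hnM, haM] at hk
    rcases hσ with rfl | rfl
    · have hw : (10*M^2+6*M+1) * (k - 5*M) = 20*M^2+7*M - ((10*M+3)*j + i) := by
        linear_combination -hk
      have hup : (10*M+3)*j + i ≤ 20*M^2 - 2*M - 4 := by
        nlinarith [mul_le_mul_of_nonneg_left hj1 (show (0:ℤ) ≤ 10*M+3 by linarith)]
      have hlow : 0 ≤ (10*M+3)*j + i := by
        nlinarith [mul_nonneg (show (0:ℤ) ≤ 10*M+3 by linarith) hj0]
      have hn'pos : (0:ℤ) < 10*M^2+6*M+1 := by nlinarith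
      have hk1 : k - 5*M = 1 := by
        rcases lt_trichotomy (k - 5*M) 1 with h | h | h
        · exfalso
          have h0 : k - 5*M ≤ 0 := by omega
          have h2 : (10*M^2+6*M+1) * (k-5*M) ≤ 0 :=
            mul_nonpos_iff.mpr (Or.inl ⟨le_of_lt hn'pos, h0⟩)
          nlinarith
        · exact h
        · exfalso
          have h2 : 2 ≤ k - 5*M := by omega
          have h3 : (10*M^2+6*M+1) * 2 ≤ (10*M^2+6*M+1) * (k-5*M) :=
            mul_le_mul_of_nonneg_left h2 (le_of_lt hn'pos)
          nlinarith
      rw [hk1, mul_one] at hw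
      have hS : (10*M+3)*j + i = 10*M^2+M-1 := by linarith
      rcases le_or_gt j (M-1) with hj | hj
      · have h4 : (10*M+3)*j ≤ (10*M+3)*(M-1) :=
          mul_le_mul_of_nonneg_left hj (by linarith)
        nlinarith
      · have hjM : M ≤ j := by omega
        have h4 : (10*M+3)*M ≤ (10*M+3)*j :=
          mul_le_mul_of_nonneg_left hjM (by linarith)
        nlinarith
    · have hw : (10*M^2+6*M+1) * (k + 5*M) = (10*M+3)*j - i - (10*M^2+M) := by
        linear_combination -hk
      have hup : (10*M+3)*j ≤ 20*M^2 - 4*M - 3 := by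
        nlinarith [mul_le_mul_of_nonneg_left hj1 (show (0:ℤ) ≤ 10*M+3 by linarith)]
      have hlow : 0 ≤ (10*M+3)*j :=
        mul_nonneg (by linarith) hj0
      have hn'pos : (0:ℤ) < 10*M^2+6*M+1 := by nlinarith
      have hk1 : k + 5*M = 0 := by
        rcases lt_trichotomy (k + 5*M) 0 with h | h | h
        · exfalso
          have h0 : k + 5*M ≤ -1 := by omega
          have h3 : (10*M^2+6*M+1) * (k+5*M) ≤ (10*M^2+6*M+1) * (-1) :=
            mul_le_mul_of_nonneg_left h0 (le_of_lt hn'pos)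
          nlinarith
        · exact h
        · exfalso
          have h0 : 1 ≤ k + 5*M := by omega
          have h3 : (10*M^2+6*M+1) * 1 ≤ (10*M^2+6*M+1) * (k+5*M) :=
            mul_le_mul_of_nonneg_left h0 (le_of_lt hn'pos)
          nlinarith
      rw [hk1, mul_zero] at hw
      have hS : (10*M+3)*j = 10*M^2+M+i := by linarith
      rcases le_or_gt j (M-1) with hj | hj
      · have h4 : (10*M+3)*j ≤ (10*M+3)*(M-1) :=
          mul_le_mul_of_nonneg_left hj (by linarith)
        nlinarith
      · have hjM : M ≤ j := by omega
        have h4 : (10*M+3)*M ≤ (10*M+3)*j :=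
          mul_le_mul_of_nonneg_left hjM (by linarith)
        nlinarith
  · have hq' : (q:ℤ) = 10*M+7 := by rw [hM]; exact_mod_cast hq
    rw [hq'] at hn'
    ring_nf at hn'
    have hnM : (n:ℤ) = 10*M^2+14*M+5 := by linarith
    have haM : (a:ℤ) = 5*M^2+7*M+2 := by linarith
    rw [hq', hnM, haM] at hk
    rcases hσ with rfl | rfl
    · have hw : (10*M^2+14*M+5) * (k - (5*M+3)) = 10*M^2+9*M+1 - ((10*M+7)*j + i) := by
        linear_combination -hk
      have hup : (10*M+7)*j + i ≤ 20*M^2 + 6*M - 8 := by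
        nlinarith [mul_le_mul_of_nonneg_left hj1 (show (0:ℤ) ≤ 10*M+7 by linarith)]
      have hlow : 0 ≤ (10*M+7)*j + i := by
        nlinarith [mul_nonneg (show (0:ℤ) ≤ 10*M+7 by linarith) hj0]
      have hn'pos : (0:ℤ) < 10*M^2+14*M+5 := by nlinarith
      have hk1 : k - (5*M+3) = 0 := by
        rcases lt_trichotomy (k - (5*M+3)) 0 with h | h | h
        · exfalso
          have h0 : k - (5*M+3) ≤ -1 := by omega
          have h3 : (10*M^2+14*M+5) * (k-(5*M+3)) ≤ (10*M^2+14*M+5) * (-1) :=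
            mul_le_mul_of_nonneg_left h0 (le_of_lt hn'pos)
          nlinarith
        · exact h
        · exfalso
          have h0 : 1 ≤ k - (5*M+3) := by omega
          have h3 : (10*M^2+14*M+5) * 1 ≤ (10*M^2+14*M+5) * (k-(5*M+3)) :=
            mul_le_mul_of_nonneg_left h0 (le_of_lt hn'pos)
          nlinarith
      rw [hk1, mul_zero] at hw
      have hS : (10*M+7)*j + i = 10*M^2+9*M+1 := by linarith
      rcases le_or_gt j M with hj | hj
      · have h4 : (10*M+7)*j ≤ (10*M+7)*M :=
          mul_le_mul_of_nonneg_left hj (by linarith)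
        nlinarith
      · have hjM : M+1 ≤ j := by omega
        have h4 : (10*M+7)*(M+1) ≤ (10*M+7)*j :=
          mul_le_mul_of_nonneg_left hjM (by linarith)
        nlinarith
    · have hw : (10*M^2+14*M+5) * (k + 5*M+3) = (10*M+7)*j - i + 5*M+3 := by
        linear_combination -hk
      have hup : (10*M+7)*j ≤ 20*M^2 + 4*M - 7 := by
        nlinarith [mul_le_mul_of_nonneg_left hj1 (show (0:ℤ) ≤ 10*M+7 by linarith)]
      have hlow : 0 ≤ (10*M+7)*j :=
        mul_nonneg (by linarith) hj0
      have hn'pos : (0:ℤ) < 10*M^2+14*M+5 := by nlinarith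
      have hk1 : k + 5*M+3 = 1 := by
        rcases lt_trichotomy (k + 5*M+3) 1 with h | h | h
        · exfalso
          have h0 : k + 5*M+3 ≤ 0 := by omega
          have h2 : (10*M^2+14*M+5) * (k+5*M+3) ≤ 0 :=
            mul_nonpos_iff.mpr (Or.inl ⟨le_of_lt hn'pos, h0⟩)
          nlinarith
        · exact h
        · exfalso
          have h0 : 2 ≤ k + 5*M+3 := by omega
          have h3 : (10*M^2+14*M+5) * 2 ≤ (10*M^2+14*M+5) * (k+5*M+3) :=
            mul_le_mul_of_nonneg_left h0 (le_of_lt hn'pos)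
          nlinarith
      rw [hk1, mul_one] at hw
      have hS : (10*M+7)*j = 10*M^2+9*M+2+i := by linarith
      rcases le_or_gt j M with hj | hj
      · have h4 : (10*M+7)*j ≤ (10*M+7)*M :=
          mul_le_mul_of_nonneg_left hj (by linarith)
        nlinarith
      · have hjM : M+1 ≤ j := by omega
        have h4 : (10*M+7)*(M+1) ≤ (10*M+7)*j :=
          mul_le_mul_of_nonneg_left hjM (by linarith)
        nlinarith

set_option maxHeartbeats 4000000

/-- The constacyclic code `C` (of length `n = (q²+1)/10`, with defining set
`Z = {s − r(a−j) : 0 ≤ j ≤ 2m−1} ∪ {s + r(a−j) : 0 ≤ j ≤ 2m−1}`) contains its Hermitian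
dual: `C^⊥h ⊆ C`. -/
theorem constacyclic_code_len_div_ten_dual_containing
    (q m : ℕ) (hq : ∃ p k : ℕ, Nat.Prime p ∧ Odd p ∧ 0 < k ∧ q = p ^ k)
    (hm : 1 ≤ m) (hform : q = 10 * m + 3 ∨ q = 10 * m + 7)
    (n N s a : ℕ) (hn : 10 * n = q ^ 2 + 1) (hN : N = (q + 1) * n)
    (hs : 2 * s = q ^ 2 + 1) (ha : 2 * a + 1 = n)
    (F : Type*) [Field F] [Fintype F] [DecidableEq F] (hF : Fintype.card F = q ^ 4)
    (β : F) (hβ : IsPrimitiveRoot β N)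
    (K : Subfield F) (hK : ∀ x : F, x ∈ K ↔ x ^ (q ^ 2) = x)
    (C : Submodule K (Fin n → K))
    (hC : ∀ c : Fin n → K, c ∈ C ↔ ∀ j : ℤ, 0 ≤ j → j ≤ 2 * (m : ℤ) - 1 →
      (∑ k : Fin n, (c k : F) *
          β ^ ((((s : ℤ) - ((q : ℤ) + 1) * ((a : ℤ) - j))) * ((k : ℕ) : ℤ)) = 0 ∧
       ∑ k : Fin n, (c k : F) *
          β ^ ((((s : ℤ) + ((q : ℤ) + 1) * ((a : ℤ) - j))) * ((k : ℕ) : ℤ)) = 0)) :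
    ∀ x : Fin n → K, (∀ y ∈ C, ∑ k : Fin n, x k * (y k) ^ q = 0) → x ∈ C := by
  intro x hx
  obtain ⟨p, kk, hp, hpodd, hkk, hqpk⟩ := hq
  -- basic numeric facts
  have hq13 : 13 ≤ q := by rcases hform with h | h <;> omega
  have hq2 : 169 ≤ q^2 := by nlinarith
  have hnpos : 0 < n := by omega
  have hNpos : 0 < N := by rw [hN]; exact Nat.mul_pos (by omega) hnpos
  have hβN : β ^ N = 1 := hβ.pow_eq_one
  have hβ0 : β ≠ 0 := by
    intro h
    rw [h, zero_pow hNpos.ne'] at hβN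
    exact zero_ne_one hβN
  have hNℤ : (N:ℤ) = ((q:ℤ)+1) * (n:ℤ) := by exact_mod_cast hN
  have hq1ne : ((q:ℤ)+1) ≠ 0 := by positivity
  have hs5 : (s:ℤ) = 5 * (n:ℤ) := by
    have : s = 5 * n := by omega
    exact_mod_cast this
  have hq2n : (q:ℤ)^2 + 1 = 10 * (n:ℤ) := by exact_mod_cast hn.symm
  -- characteristic
  have hp2 : p ≠ 2 := by
    rintro rfl
    exact (by norm_num : ¬ Odd 2) hpodd
  haveI hcharF : CharP F p := by
    haveI := ringChar.charP F
    obtain ⟨d, hpr, hcard⟩ := FiniteField.card F (ringChar F)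
    have h1 : ringChar F ∣ q ^ 4 := by
      rw [← hF, hcard]
      exact dvd_pow_self _ (by positivity)
    have h2 : ringChar F ∣ p := by
      rw [hqpk, ← pow_mul] at h1
      exact hpr.dvd_of_dvd_pow h1
    have h3 : ringChar F = p := (Nat.prime_dvd_prime_iff_eq hpr hp).mp h2
    exact h3 ▸ ringChar.charP F
  haveI hexp : ExpChar F p := ExpChar.prime hp
  haveI hfact : Fact p.Prime := ⟨hp⟩
  have h2F : (2:F) ≠ 0 := by
    have h1 : ((2:ℕ):F) ≠ 0 := by
      rw [Ne, CharP.cast_eq_zero_iff F p]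
      intro h
      exact hp2 ((Nat.prime_dvd_prime_iff_eq hp Nat.prime_two).mp h)
    simpa using h1
  have hq2p : q^2 = p^(2*kk) := by rw [hqpk, ← pow_mul, Nat.mul_comm]
  have hqp : q = p^kk := hqpk
  have hpow4 : ∀ u : F, u ^ (q^4) = u := fun u => by rw [← hF]; exact FiniteField.pow_card u
  have hadd2 : ∀ u v : F, (u+v)^(q^2) = u^(q^2) + v^(q^2) := by
    intro u v; rw [hq2p]; exact add_pow_char_pow ..
  have hadd1 : ∀ u v : F, (u+v)^q = u^q + v^q := by
    intro u v; rw [hqp]; exact add_pow_char_pow ..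
  have hfrob : ∀ (f : Fin n → F), (∑ i : Fin n, f i)^(q^2) = ∑ i : Fin n, (f i)^(q^2) := by
    intro f; rw [hq2p]; exact sum_pow_char_pow ..
  -- zpow toolkit
  have hzpow_natpow : ∀ (w : ℤ) (M : ℕ), (β ^ w) ^ M = β ^ (w * (M:ℤ)) := fun w M => by
    rw [← zpow_natCast (β ^ w) M, ← zpow_mul]
  have hmodN : ∀ z₁ z₂ : ℤ, (N:ℤ) ∣ (z₁ - z₂) → β ^ z₁ = β ^ z₂ := by
    rintro z₁ z₂ ⟨t, ht⟩
    have hz : z₁ = z₂ + (N:ℤ) * t := by linarith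
    rw [hz, zpow_add₀ hβ0, zpow_mul, zpow_natCast, hβN, one_zpow, mul_one]
  have hβ4 : ∀ z : ℤ, β ^ ((q:ℤ)^4 * z) = β ^ z := fun z => by
    rw [show (q:ℤ)^4 * z = z * (((q^4 : ℕ)):ℤ) from by push_cast; ring, ← hzpow_natpow, hpow4]
  -- geometric sum lemma
  have hgeo : ∀ d : ℤ, ((q:ℤ)+1) ∣ d → ¬ ((N:ℤ) ∣ d) →
      ∑ k : Fin n, β ^ (d * ((k:ℕ):ℤ)) = 0 := by
    rintro d ⟨e, he⟩ hnd
    have h1 : ∀ k : Fin n, β ^ (d * ((k:ℕ):ℤ)) = (β ^ d) ^ (k:ℕ) := fun k => by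
      rw [zpow_mul, zpow_natCast]
    rw [Finset.sum_congr rfl (fun k _ => h1 k),
        Fin.sum_univ_eq_sum_range (fun i => (β^d)^i) n]
    have hne : β ^ d ≠ 1 := fun h => hnd ((hβ.zpow_eq_one_iff_dvd d).mp h)
    rw [geom_sum_eq hne]
    have hdn : (β ^ d) ^ n = 1 := by
      rw [hzpow_natpow]
      apply (hβ.zpow_eq_one_iff_dvd _).mpr
      exact ⟨e, by rw [hNℤ]; push_cast [he]; ring⟩
    rw [hdn, sub_self, zero_div]
  -- the evaluation maps
  set ψ : ℤ → F := fun z => ∑ k : Fin n, ((x k : F)) * β ^ (z * ((k:ℕ):ℤ)) with hψ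
  have hx2 : ∀ k : Fin n, (x k : F) ^ (q^2) = (x k : F) := fun k => (hK _).mp (x k).2
  have hψcongr : ∀ z₁ z₂ : ℤ, (N:ℤ) ∣ (z₁ - z₂) → ψ z₁ = ψ z₂ := by
    intro z₁ z₂ h
    apply Finset.sum_congr rfl
    intro k _
    congr 1
    exact hmodN _ _ (by simpa [sub_mul] using h.mul_right ((k:ℕ):ℤ))
  have hψfrob : ∀ z : ℤ, (ψ z)^(q^2) = ψ ((q:ℤ)^2 * z) := by
    intro z
    rw [hψ]
    simp only
    rw [hfrob]
    apply Finset.sum_congr rfl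
    intro k _
    rw [mul_pow, hx2, hzpow_natpow]
    congr 1
    push_cast
    ring
  have hdvd_iff : ∀ A B : ℤ, A = B → ((n:ℤ) ∣ A) → ((n:ℤ) ∣ B) := fun A B h hA => h ▸ hA
  -- NT lemma in symmetric form
  have hNT2 : ∀ (i j σ τ : ℤ), 0 ≤ i → i ≤ 2*(m:ℤ)-1 → 0 ≤ j → j ≤ 2*(m:ℤ)-1 →
      (σ = 1 ∨ σ = -1) → (τ = 1 ∨ τ = -1) →
      ¬ ((n:ℤ) ∣ σ*((a:ℤ)-i) + τ*(q:ℤ)*((a:ℤ)-j)) := by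
    intro i j σ τ hi0 hi1 hj0 hj1 hσ hτ hdv
    rcases hσ with rfl | rfl <;> rcases hτ with rfl | rfl
    · exact nt_aux q m n a hm hform hn ha i j 1 hi0 hi1 hj0 hj1 (Or.inl rfl)
        (hdvd_iff _ _ (by ring) hdv)
    · exact nt_aux q m n a hm hform hn ha i j (-1) hi0 hi1 hj0 hj1 (Or.inr rfl)
        (hdvd_iff _ _ (by ring) hdv)
    · exact nt_aux q m n a hm hform hn ha i j (-1) hi0 hi1 hj0 hj1 (Or.inr rfl)
        (dvd_neg.mp (hdvd_iff _ _ (by ring) hdv))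
    · exact nt_aux q m n a hm hform hn ha i j 1 hi0 hi1 hj0 hj1 (Or.inl rfl)
        (dvd_neg.mp (hdvd_iff _ _ (by ring) hdv))
  -- the key claim
  have key : ∀ t₀ : ℤ,
      (∃ j : ℤ, 0 ≤ j ∧ j ≤ 2*(m:ℤ)-1 ∧ (t₀ = (a:ℤ) - j ∨ t₀ = -((a:ℤ) - j))) →
      ψ ((s:ℤ) + ((q:ℤ)+1) * t₀) = 0 := by
    intro t₀ ht₀
    have hNT : ∀ w : ℤ,
        (∃ i : ℤ, 0 ≤ i ∧ i ≤ 2*(m:ℤ)-1 ∧ (w = (a:ℤ) - i ∨ w = -((a:ℤ)-i))) →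
        ¬ ((n:ℤ) ∣ w - (q:ℤ) * t₀) ∧ ¬ ((n:ℤ) ∣ w + (q:ℤ) * t₀) := by
      rintro w ⟨i, hi0, hi1, hwi⟩
      obtain ⟨j, hj0, hj1, htj⟩ := ht₀
      constructor <;> intro hdv
      · rcases hwi with rfl | rfl <;> rcases htj with rfl | rfl
        · exact hNT2 i j 1 (-1) hi0 hi1 hj0 hj1 (Or.inl rfl) (Or.inr rfl)
            (hdvd_iff _ _ (by ring) hdv)
        · exact hNT2 i j 1 1 hi0 hi1 hj0 hj1 (Or.inl rfl) (Or.inl rfl)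
            (hdvd_iff _ _ (by ring) hdv)
        · exact hNT2 i j (-1) (-1) hi0 hi1 hj0 hj1 (Or.inr rfl) (Or.inr rfl)
            (hdvd_iff _ _ (by ring) hdv)
        · exact hNT2 i j (-1) 1 hi0 hi1 hj0 hj1 (Or.inr rfl) (Or.inl rfl)
            (hdvd_iff _ _ (by ring) hdv)
      · rcases hwi with rfl | rfl <;> rcases htj with rfl | rfl
        · exact hNT2 i j 1 1 hi0 hi1 hj0 hj1 (Or.inl rfl) (Or.inl rfl)
            (hdvd_iff _ _ (by ring) hdv)
        · exact hNT2 i j 1 (-1) hi0 hi1 hj0 hj1 (Or.inl rfl) (Or.inr rfl)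
            (hdvd_iff _ _ (by ring) hdv)
        · exact hNT2 i j (-1) 1 hi0 hi1 hj0 hj1 (Or.inr rfl) (Or.inl rfl)
            (hdvd_iff _ _ (by ring) hdv)
        · exact hNT2 i j (-1) (-1) hi0 hi1 hj0 hj1 (Or.inr rfl) (Or.inr rfl)
            (hdvd_iff _ _ (by ring) hdv)
    set A : F := ψ ((s:ℤ) + ((q:ℤ)+1) * t₀) with hA
    have main : ∀ lam : F, lam^q * A + lam^(q^3) * A^(q^2) = 0 := by
      intro lam
      set c : ℤ := (s:ℤ) + ((q:ℤ)+1)*(q:ℤ)*t₀ with hc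
      have hmem : ∀ k : Fin n,
          lam * β ^ ((-c) * ((k:ℕ):ℤ)) + lam^(q^2) * β ^ ((-((q:ℤ)^2 * c)) * ((k:ℕ):ℤ)) ∈ K := by
        intro k
        rw [hK, hadd2]
        have e1 : (lam * β ^ ((-c) * ((k:ℕ):ℤ)))^(q^2)
            = lam^(q^2) * β ^ ((-((q:ℤ)^2*c)) * ((k:ℕ):ℤ)) := by
          rw [mul_pow, hzpow_natpow]
          congr 1
          push_cast
          ring
        have e2 : (lam^(q^2) * β ^ ((-((q:ℤ)^2*c)) * ((k:ℕ):ℤ)))^(q^2)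
            = lam * β ^ ((-c) * ((k:ℕ):ℤ)) := by
          rw [mul_pow, ← pow_mul, show q^2*q^2 = q^4 from by ring, hpow4, hzpow_natpow]
          congr 1
          rw [show (-((q:ℤ)^2*c)) * ((k:ℕ):ℤ) * ((q^2:ℕ):ℤ) = (q:ℤ)^4 * ((-c) * ((k:ℕ):ℤ))
            from by push_cast; ring, hβ4]
        rw [e1, e2, add_comm]
      set Y : Fin n → K := fun k =>
        (⟨lam * β ^ ((-c) * ((k:ℕ):ℤ)) + lam^(q^2) * β ^ ((-((q:ℤ)^2 * c)) * ((k:ℕ):ℤ)),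
          hmem k⟩ : K) with hYdef
      have hcoe : ∀ k : Fin n, ((Y k : F))
          = lam * β ^ ((-c) * ((k:ℕ):ℤ)) + lam^(q^2) * β ^ ((-((q:ℤ)^2 * c)) * ((k:ℕ):ℤ)) :=
        fun k => rfl
      have hsplit : ∀ z : ℤ, (∑ k : Fin n, (Y k : F) * β ^ (z * ((k:ℕ):ℤ)))
          = lam * (∑ k : Fin n, β ^ ((z - c) * ((k:ℕ):ℤ)))
            + lam^(q^2) * (∑ k : Fin n, β ^ ((z - (q:ℤ)^2*c) * ((k:ℕ):ℤ))) := by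
        intro z
        rw [Finset.mul_sum, Finset.mul_sum, ← Finset.sum_add_distrib]
        apply Finset.sum_congr rfl
        intro k _
        rw [hcoe, add_mul, mul_assoc, mul_assoc]
        congr 2
        · rw [← zpow_add₀ hβ0]; congr 1; ring
        · rw [← zpow_add₀ hβ0]; congr 1; ring
      -- membership of Y in C
      have hvanish : ∀ z : ℤ, (∃ δ : ℤ, (δ = 1 ∨ δ = -1) ∧
            ∃ i : ℤ, 0 ≤ i ∧ i ≤ 2*(m:ℤ)-1 ∧ z = (s:ℤ) + ((q:ℤ)+1) * (δ * ((a:ℤ)-i))) →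
          (∑ k : Fin n, (Y k : F) * β ^ (z * ((k:ℕ):ℤ))) = 0 := by
        rintro z ⟨δ, hδ, i, hi0, hi1, rfl⟩
        have hw : ∃ i' : ℤ, 0 ≤ i' ∧ i' ≤ 2*(m:ℤ)-1 ∧
            (δ * ((a:ℤ)-i) = (a:ℤ) - i' ∨ δ * ((a:ℤ)-i) = -((a:ℤ)-i')) := by
          rcases hδ with rfl | rfl
          · exact ⟨i, hi0, hi1, Or.inl (by ring)⟩
          · exact ⟨i, hi0, hi1, Or.inr (by ring)⟩
        obtain ⟨hw1, hw2⟩ := hNT (δ * ((a:ℤ)-i)) hw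
        rw [hsplit]
        have h1 : (∑ k : Fin n, β ^ (((s:ℤ) + ((q:ℤ)+1) * (δ * ((a:ℤ)-i)) - c) * ((k:ℕ):ℤ))) = 0 := by
          apply hgeo
          · exact ⟨δ * ((a:ℤ)-i) - (q:ℤ)*t₀, by rw [hc]; ring⟩
          · intro hdd
            apply hw1
            have h' : ((q:ℤ)+1) * (n:ℤ) ∣ ((q:ℤ)+1) * (δ * ((a:ℤ)-i) - (q:ℤ)*t₀) := by
              rw [show ((q:ℤ)+1) * (δ * ((a:ℤ)-i) - (q:ℤ)*t₀)
                  = (s:ℤ) + ((q:ℤ)+1) * (δ * ((a:ℤ)-i)) - c from by rw [hc]; ring, ← hNℤ]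
              exact hdd
            exact (mul_dvd_mul_iff_left hq1ne).mp h'
        have h2 : (∑ k : Fin n, β ^ (((s:ℤ) + ((q:ℤ)+1) * (δ * ((a:ℤ)-i)) - (q:ℤ)^2*c) * ((k:ℕ):ℤ))) = 0 := by
          apply hgeo
          · exact ⟨δ * ((a:ℤ)-i) - (s:ℤ)*((q:ℤ)-1) - (q:ℤ)^3*t₀, by rw [hc]; ring⟩
          · intro hdd
            apply hw2
            have h' : ((q:ℤ)+1) * (n:ℤ) ∣
                ((q:ℤ)+1) * (δ * ((a:ℤ)-i) - (s:ℤ)*((q:ℤ)-1) - (q:ℤ)^3*t₀) := by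
              rw [show ((q:ℤ)+1) * (δ * ((a:ℤ)-i) - (s:ℤ)*((q:ℤ)-1) - (q:ℤ)^3*t₀)
                  = (s:ℤ) + ((q:ℤ)+1) * (δ * ((a:ℤ)-i)) - (q:ℤ)^2*c from by rw [hc]; ring, ← hNℤ]
              exact hdd
            have h'' : (n:ℤ) ∣ δ * ((a:ℤ)-i) - (s:ℤ)*((q:ℤ)-1) - (q:ℤ)^3*t₀ :=
              (mul_dvd_mul_iff_left hq1ne).mp h'
            -- reduce mod n : s = 5n, q³t₀ = q t₀ (q²+1) − q t₀
            have h3 : (n:ℤ) ∣ (δ * ((a:ℤ)-i) + (q:ℤ)*t₀)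
                - (n:ℤ) * (5*((q:ℤ)-1) + 10*(q:ℤ)*t₀) := by
              apply hdvd_iff _ _ _ h''
              rw [hs5]
              linear_combination (-((q:ℤ)*t₀)) * hq2n
            have h4 : (n:ℤ) ∣ (δ * ((a:ℤ)-i) + (q:ℤ)*t₀) := by
              have h5 := dvd_add h3 (Dvd.intro _ (rfl : (n:ℤ) * (5*((q:ℤ)-1) + 10*(q:ℤ)*t₀) = _))
              exact hdvd_iff _ _ (by ring) h5
            exact h4
        rw [h1, h2, mul_zero, mul_zero, add_zero]
      have hYC : Y ∈ C := by
        rw [hC]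
        intro i hi0 hi1
        constructor
        · apply hvanish
          exact ⟨-1, Or.inr rfl, i, hi0, hi1, by ring⟩
        · apply hvanish
          exact ⟨1, Or.inl rfl, i, hi0, hi1, by ring⟩
      have hherm := hx Y hYC
      have hhermF : ∑ k : Fin n, (x k : F) * ((Y k : F))^q = 0 := by
        have h0 : ((∑ k : Fin n, x k * (Y k)^q : K) : F) = ((0:K):F) := by rw [hherm]
        push_cast at h0
        exact h0
      have hYq : ∀ k : Fin n, ((Y k : F))^q
          = lam^q * β ^ ((-((q:ℤ)*c)) * ((k:ℕ):ℤ))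
            + lam^(q^3) * β ^ ((-((q:ℤ)^3*c)) * ((k:ℕ):ℤ)) := by
        intro k
        rw [hcoe, hadd1, mul_pow, mul_pow, hzpow_natpow, hzpow_natpow, ← pow_mul,
          show q^2*q = q^3 from by ring]
        congr 2
        · ring
        · ring
      have hmain2 : lam^q * ψ (-((q:ℤ)*c)) + lam^(q^3) * ψ (-((q:ℤ)^3*c)) = 0 := by
        rw [hψ]
        simp only
        calc lam^q * (∑ k : Fin n, (x k : F) * β ^ ((-((q:ℤ)*c)) * ((k:ℕ):ℤ)))
              + lam^(q^3) * (∑ k : Fin n, (x k : F) * β ^ ((-((q:ℤ)^3*c)) * ((k:ℕ):ℤ)))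
            = ∑ k : Fin n, (x k : F) * ((Y k : F))^q := by
              rw [Finset.mul_sum, Finset.mul_sum, ← Finset.sum_add_distrib]
              apply Finset.sum_congr rfl
              intro k _
              rw [hYq k]
              ring
          _ = 0 := hhermF
      have h1 : ψ (-((q:ℤ)*c)) = A := by
        rw [hA]
        apply hψcongr
        refine ⟨-5 - 10*t₀, ?_⟩
        rw [hc, hNℤ]
        linear_combination (-(((q:ℤ)+1))) * hs5 + (-(((q:ℤ)+1))*t₀) * hq2n
      have h2 : ψ (-((q:ℤ)^3*c)) = A^(q^2) := by
        rw [hA, hψfrob]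
        apply hψcongr
        refine ⟨-(q:ℤ)^2*(5 + 10*t₀), ?_⟩
        rw [hc, hNℤ]
        linear_combination (-(q:ℤ)^2*((q:ℤ)+1)) * hs5 + (-(q:ℤ)^2*((q:ℤ)+1)*t₀) * hq2n
      rw [h1, h2] at hmain2
      exact hmain2
    by_contra hA0
    have hlam1 : ((A⁻¹)^(q^3))^q = A⁻¹ := by
      rw [← pow_mul, show q^3*q = q^4 from by ring, hpow4]
    have hlam2 : ((A⁻¹)^(q^3))^(q^3) = (A^(q^2))⁻¹ := by
      rw [← pow_mul, show q^3*q^3 = q^4*q^2 from by ring, pow_mul, hpow4, inv_pow]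
    have hfin := main ((A⁻¹)^(q^3))
    rw [hlam1, hlam2, inv_mul_cancel₀ hA0, inv_mul_cancel₀ (pow_ne_zero _ hA0)] at hfin
    exact h2F (by rw [← one_add_one_eq_two]; exact hfin)
  -- conclude
  refine (hC x).mpr ?_
  intro j hj0 hj1
  constructor
  · have h := key (-((a:ℤ) - j)) ⟨j, hj0, hj1, Or.inr rfl⟩
    rw [hψ] at h
    simp only at h
    rw [show (s:ℤ) - ((q:ℤ)+1) * ((a:ℤ)-j) = (s:ℤ) + ((q:ℤ)+1) * (-((a:ℤ)-j)) from by ring]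
    exact h
  · exact key ((a:ℤ) - j) ⟨j, hj0, hj1, Or.inl rfl⟩
end
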